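/- arXiv:2212.04392 — 5 statements merged into one kernel-verified Lean document; each statement's English description precedes it below -/
import Mathlib

section
/- There exists a constant C > 0 depending only on the dimension d such that for all sufficiently small ε > 0, every n ≥ 1, and every X_n ∈ Λ^n with |x_i − x_j| > ε for all 1 ≤ i < j ≤ n, one has |1 − 𝒵_ε^{-1} ∑_{p≥0} (μ_ε^p/p!) ∫_{Λ^p} ∏_{1≤j<k≤p} 1_{|x̄_j−x̄_k|>ε} ∏_{1≤i≤n, 1≤j≤p} 1_{|x_i−x̄_j|>ε} dX̄_p| ≤ C^n ε. -/
open MeasureTheory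
open scoped BigOperators

noncomputable section

/-- The `d`-dimensional flat torus `ℝ^d/ℤ^d`. -/
abbrev Torus (d : ℕ) : Type := Fin d → AddCircle (1 : ℝ)

/-- Velocity space `ℝ^d` with the Euclidean norm. -/
abbrev Vel (d : ℕ) : Type := EuclideanSpace ℝ (Fin d)

/-- One-particle phase space `𝔻 = Λ × ℝ^d`. -/
abbrev Phase (d : ℕ) : Type := Torus d × Vel d

/-- The Euclidean quotient distance on the torus. -/
def tdist {d : ℕ} (x y : Torus d) : ℝ := Real.sqrt (∑ i, dist (x i) (y i) ^ 2)

/-- The standard Maxwellian `M(v) = (2π)^{-d/2} exp(-‖v‖²/2)`. -/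
def maxwellian (d : ℕ) (v : Vel d) : ℝ :=
  (2 * Real.pi) ^ (-(d : ℝ) / 2) * Real.exp (-‖v‖ ^ 2 / 2)

/-- Boltzmann–Grad scale `μ_ε = ε^{-(d-1)}`. -/
def mu (d : ℕ) (ε : ℝ) : ℝ := ε⁻¹ ^ (d - 1)

/-- Hard-core exclusion: all pairwise torus distances exceed `ε`. -/
def HardCore {d : ℕ} (ε : ℝ) {n : ℕ} (X : Fin n → Torus d) : Prop :=
  ∀ i j : Fin n, i < j → ε < tdist (X i) (X j)

/-- Grand canonical partition function `𝒵_ε`. -/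
def partitionFn (d : ℕ) (ε : ℝ) : ℝ :=
  ∑' p : ℕ, (mu d ε) ^ p / (p.factorial : ℝ) *
    ∫ Y : Fin p → Torus d, Set.indicator {Y | HardCore ε Y} (fun _ => (1 : ℝ)) Y

/-- Grand canonical Gibbs expectation `E_ε[h_n]` of a fixed `n`-particle observable. -/
def gibbsExpFun (d : ℕ) (ε : ℝ) (n : ℕ) (h : (Fin n → Phase d) → ℝ) : ℝ :=
  (partitionFn d ε)⁻¹ *
    ∑' q : ℕ, (mu d ε) ^ q / (q.factorial : ℝ) *
      ∫ Z : Fin (n + q) → Phase d,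
        Set.indicator {Z : Fin (n + q) → Phase d | HardCore ε fun i => (Z i).1}
          (fun Z => h (fun i : Fin n => Z (Fin.castAdd q i)) * ∏ i, maxwellian d (Z i).2) Z

/-- Gibbs expectation `E_ε[F]` of a functional of the whole configuration. -/
def gibbsExpConfig (d : ℕ) (ε : ℝ) (F : (p : ℕ) → (Fin p → Phase d) → ℝ) : ℝ :=
  (partitionFn d ε)⁻¹ *
    ∑' p : ℕ, (mu d ε) ^ p / (p.factorial : ℝ) *
      ∫ Z : Fin p → Phase d,
        Set.indicator {Z : Fin p → Phase d | HardCore ε fun i => (Z i).1}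
          (fun Z => F p Z * ∏ i, maxwellian d (Z i).2) Z

/-- Empirical sum `μ_ε^{-n} ∑_{(i_1,…,i_n) distinct} h(z_{i_1},…,z_{i_n})`. -/
def empSum (d : ℕ) (ε : ℝ) {n : ℕ} (h : (Fin n → Phase d) → ℝ) (p : ℕ)
    (Z : Fin p → Phase d) : ℝ :=
  ((mu d ε) ^ n)⁻¹ * ∑ σ : Fin n ↪ Fin p, h (fun i => Z (σ i))

/-- Truncated (centered) empirical functional `ĥ_n`. -/
def hatFun (d : ℕ) (ε : ℝ) {n : ℕ} (h : (Fin n → Phase d) → ℝ) (p : ℕ)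
    (Z : Fin p → Phase d) : ℝ :=
  empSum d ε h p Z - gibbsExpFun d ε n h

/-- Translation `τ_y` of all positions. -/
def phaseTranslate {d n : ℕ} (y : Torus d) (Z : Fin n → Phase d) : Fin n → Phase d :=
  fun i => ((Z i).1 + y, (Z i).2)

/-- Pin the position of the first particle at the origin. -/
def pinFirst {d n : ℕ} (Z : Fin n → Phase d) : Fin n → Phase d :=
  fun i => (if (i : ℕ) = 0 then 0 else (Z i).1, (Z i).2)

/-- The translation-invariant weighted `L¹` quantity
`∫_{x_1 = 0} sup_{y∈Λ} |g(τ_y Z_n)| M^{⊗n}(V_n) dX_{2,n} dV_n`. -/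
def pinnedIntegral (d : ℕ) {n : ℕ} (g : (Fin n → Phase d) → ℝ) : ℝ :=
  ∫ Z : Fin n → Phase d,
    (⨆ y : Torus d, |g (phaseTranslate y (pinFirst Z))|) * ∏ i, maxwellian d (Z i).2

end

open scoped ENNReal

instance probAddCircle : IsProbabilityMeasure (volume : Measure (AddCircle (1:ℝ))) :=
  ⟨by simp [AddCircle.measure_univ]⟩

section aux
open Set


variable {d : ℕ}

lemma tdist_comm (x y : Torus d) : tdist x y = tdist y x := by
  unfold tdist; congr 1; exact Finset.sum_congr rfl fun i _ => by rw [dist_comm]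

lemma continuous_tdist (x : Torus d) : Continuous fun y : Torus d => tdist x y := by
  unfold tdist
  exact Real.continuous_sqrt.comp <| continuous_finset_sum _ fun i _ =>
    (continuous_const.dist (continuous_apply i)).pow 2

lemma continuous_tdist2 {p : ℕ} (i j : Fin p) :
    Continuous fun Y : Fin p → Torus d => tdist (Y i) (Y j) := by
  unfold tdist
  exact Real.continuous_sqrt.comp <| continuous_finset_sum _ fun k _ =>
    (((continuous_apply k).comp (continuous_apply i)).dist
      ((continuous_apply k).comp (continuous_apply j))).pow 2

lemma measurableSet_HC (ε : ℝ) (p : ℕ) :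
    MeasurableSet {Y : Fin p → Torus d | HardCore ε Y} := by
  have h : {Y : Fin p → Torus d | HardCore ε Y} =
      ⋂ i, ⋂ j, {Y : Fin p → Torus d | i < j → ε < tdist (Y i) (Y j)} := by
    ext Y; simp [HardCore, Set.mem_iInter]
  rw [h]
  refine MeasurableSet.iInter fun i => MeasurableSet.iInter fun j => ?_
  by_cases hij : i < j
  · simp only [hij, true_implies]
    exact measurableSet_lt measurable_const (continuous_tdist2 i j).measurable
  · simp [hij]

lemma measurableSet_HCX (ε : ℝ) {n p : ℕ} (X : Fin n → Torus d) :
    MeasurableSet {Y : Fin p → Torus d | HardCore ε Y ∧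
      ∀ (i : Fin n) (j : Fin p), ε < tdist (X i) (Y j)} := by
  rw [Set.setOf_and]
  refine (measurableSet_HC ε p).inter ?_
  have h : {Y : Fin p → Torus d | ∀ (i : Fin n) (j : Fin p), ε < tdist (X i) (Y j)} =
      ⋂ i, ⋂ j, {Y : Fin p → Torus d | ε < tdist (X i) (Y j)} := by
    ext Y; simp [Set.mem_iInter]
  rw [h]
  refine MeasurableSet.iInter fun i => MeasurableSet.iInter fun j => ?_
  exact measurableSet_lt measurable_const
    ((continuous_tdist (X i)).comp (continuous_apply j)).measurable

lemma measurableSet_tball (x : Torus d) (ε : ℝ) :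
    MeasurableSet {y : Torus d | tdist x y ≤ ε} :=
  measurableSet_le (continuous_tdist x).measurable measurable_const

lemma tball_vol (x : Torus d) {ε : ℝ} (hε : 0 ≤ ε) :
    volume {y : Torus d | tdist x y ≤ ε} ≤ ENNReal.ofReal ((2*ε)^d) := by
  have hsub : {y : Torus d | tdist x y ≤ ε} ⊆
      Set.univ.pi fun i => Metric.closedBall (x i) ε := by
    intro y hy i _
    have h1 : dist (x i) (y i) ≤ tdist x y := by
      have h2 : dist (x i) (y i) ^ 2 ≤ ∑ k, dist (x k) (y k) ^ 2 :=
        Finset.single_le_sum (f := fun k => dist (x k) (y k) ^ 2) (fun k _ => sq_nonneg _) (Finset.mem_univ i)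
      have := Real.sqrt_le_sqrt h2
      rwa [Real.sqrt_sq dist_nonneg] at this
    simp only [Metric.mem_closedBall]
    rw [dist_comm]
    exact h1.trans hy
  refine (measure_mono hsub).trans ?_
  rw [volume_pi_pi]
  calc ∏ i : Fin d, volume (Metric.closedBall (x i) ε)
      ≤ ∏ _i : Fin d, ENNReal.ofReal (2*ε) := by
        refine Finset.prod_le_prod' fun i _ => ?_
        rw [AddCircle.volume_closedBall]
        exact ENNReal.ofReal_le_ofReal (min_le_right _ _)
    _ = ENNReal.ofReal ((2*ε)^d) := by
        rw [Finset.prod_const, Finset.card_univ, Fintype.card_fin,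
          ← ENNReal.ofReal_pow (by linarith)]

lemma HardCore.comp_inj {ε : ℝ} {p q : ℕ} {Y : Fin p → Torus d} (h : HardCore ε Y)
    {σ : Fin q → Fin p} (hσ : Function.Injective σ) : HardCore ε fun i => Y (σ i) := by
  intro i j hij
  rcases (hσ.ne hij.ne).lt_or_gt with hc | hc
  · exact h _ _ hc
  · rw [tdist_comm]; exact h _ _ hc

lemma marginal (x : Torus d) {ε : ℝ} (hε : 0 ≤ ε) (k : ℕ) (j : Fin (k+1)) :
    volume {Y : Fin (k+1) → Torus d | HardCore ε Y ∧ tdist x (Y j) ≤ ε}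
      ≤ ENNReal.ofReal ((2*ε)^d) * volume {Y : Fin k → Torus d | HardCore ε Y} := by
  have mp : MeasurePreserving (MeasurableEquiv.piFinSuccAbove (fun _ => Torus d) j)
      volume ((volume : Measure (Torus d)).prod (volume : Measure (Fin k → Torus d))) :=
    measurePreserving_piFinSuccAbove (fun _ => volume) j
  have hsub : {Y : Fin (k+1) → Torus d | HardCore ε Y ∧ tdist x (Y j) ≤ ε} ⊆
      (MeasurableEquiv.piFinSuccAbove (fun _ => Torus d) j) ⁻¹'
        ({y : Torus d | tdist x y ≤ ε} ×ˢ {Y : Fin k → Torus d | HardCore ε Y}) := by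
    rintro Y ⟨hHC, hball⟩
    exact ⟨hball, hHC.comp_inj (Fin.strictMono_succAbove j).injective⟩
  refine (measure_mono hsub).trans ?_
  rw [mp.measure_preimage
    (((measurableSet_tball x ε).prod (measurableSet_HC ε k)).nullMeasurableSet),
    Measure.prod_prod]
  exact mul_le_mul_left (tball_vol x hε) _

lemma key_bound {ε : ℝ} (hε : 0 ≤ ε) {n : ℕ} (X : Fin n → Torus d) (k : ℕ) :
    volume {Y : Fin (k+1) → Torus d | HardCore ε Y} ≤
      volume {Y : Fin (k+1) → Torus d | HardCore ε Y ∧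
          ∀ (i : Fin n) (j : Fin (k+1)), ε < tdist (X i) (Y j)} +
        (n : ℝ≥0∞) * ((k+1 : ℕ) : ℝ≥0∞) *
          (ENNReal.ofReal ((2*ε)^d) * volume {Y : Fin k → Torus d | HardCore ε Y}) := by
  set A := {Y : Fin (k+1) → Torus d | HardCore ε Y} with hA
  set B := {Y : Fin (k+1) → Torus d | ∀ (i : Fin n) (j : Fin (k+1)), ε < tdist (X i) (Y j)}
    with hB
  have h1 : volume A ≤ volume (A ∩ B) + volume (A \ B) := measure_le_inter_add_diff _ _ _
  have hAB : A ∩ B = {Y : Fin (k+1) → Torus d | HardCore ε Y ∧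
      ∀ (i : Fin n) (j : Fin (k+1)), ε < tdist (X i) (Y j)} := rfl
  have h2 : A \ B ⊆ ⋃ i : Fin n, ⋃ j : Fin (k+1),
      {Y : Fin (k+1) → Torus d | HardCore ε Y ∧ tdist (X i) (Y j) ≤ ε} := by
    rintro Y ⟨hYA, hYB⟩
    rw [hB, Set.mem_setOf_eq] at hYB
    push_neg at hYB
    obtain ⟨i, j, hij⟩ := hYB
    exact Set.mem_iUnion.2 ⟨i, Set.mem_iUnion.2 ⟨j, hYA, hij⟩⟩
  have h3 : volume (A \ B) ≤ (n : ℝ≥0∞) * ((k+1 : ℕ) : ℝ≥0∞) *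
      (ENNReal.ofReal ((2*ε)^d) * volume {Y : Fin k → Torus d | HardCore ε Y}) := by
    refine (measure_mono h2).trans ?_
    refine (measure_iUnion_le _).trans ?_
    refine (ENNReal.tsum_le_tsum fun i => measure_iUnion_le _).trans ?_
    refine (ENNReal.tsum_le_tsum fun i => ENNReal.tsum_le_tsum fun j =>
      marginal (X i) hε k j).trans ?_
    simp only [tsum_fintype, Finset.sum_const, Finset.card_univ, Fintype.card_fin,
      nsmul_eq_mul]
    rw [← mul_assoc]
  calc volume A ≤ volume (A ∩ B) + volume (A \ B) := h1
    _ ≤ _ := by rw [hAB]; exact add_le_add_right h3 _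

end aux

/-- the conditioned partition function is close to `1`. -/
theorem statement6 (d : ℕ) (hd : 3 ≤ d) :
    ∃ C : ℝ, 0 < C ∧ ∃ ε₀ : ℝ, 0 < ε₀ ∧
      ∀ ε : ℝ, 0 < ε → ε < ε₀ →
        ∀ n : ℕ, 1 ≤ n → ∀ X : Fin n → Torus d, HardCore ε X →
          |1 - (partitionFn d ε)⁻¹ *
              ∑' p : ℕ, (mu d ε) ^ p / (p.factorial : ℝ) *
                ∫ Y : Fin p → Torus d,
                  Set.indicator
                    {Y : Fin p → Torus d | HardCore ε Y ∧
                      ∀ (i : Fin n) (j : Fin p), ε < tdist (X i) (Y j)}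
                    (fun _ => (1 : ℝ)) Y|
            ≤ C ^ n * ε := by
  refine ⟨2^(d+1), by positivity, 1, one_pos, ?_⟩
  intro ε hε hε1 n hn X hX
  have hμpos : 0 < mu d ε := pow_pos (inv_pos.2 hε) _
  set μ : ℝ := mu d ε with hμdef
  set V : ℕ → ℝ≥0∞ := fun p => volume {Y : Fin p → Torus d | HardCore ε Y} with hV
  set W : ℕ → ℝ≥0∞ := fun p =>
    volume {Y : Fin p → Torus d | HardCore ε Y ∧
      ∀ (i : Fin n) (j : Fin p), ε < tdist (X i) (Y j)} with hW
  set t : ℕ → ℝ := fun p => μ ^ p / (p.factorial : ℝ) * (V p).toReal with ht_def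
  set t' : ℕ → ℝ := fun p => μ ^ p / (p.factorial : ℝ) * (W p).toReal with ht'_def
  have hVtop : ∀ p, V p ≠ ⊤ := fun p => measure_ne_top _ _
  have hWtop : ∀ p, W p ≠ ⊤ := fun p => measure_ne_top _ _
  have hVle1 : ∀ p, (V p).toReal ≤ 1 := fun p => by
    have : V p ≤ 1 := prob_le_one
    simpa using ENNReal.toReal_mono (by simp) this
  have hWleV : ∀ p, (W p).toReal ≤ (V p).toReal := fun p =>
    ENNReal.toReal_mono (hVtop p) (measure_mono fun Y h => h.1)
  have htnn : ∀ p, 0 ≤ t p := fun p => by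
    apply mul_nonneg (by positivity) ENNReal.toReal_nonneg
  have ht'nn : ∀ p, 0 ≤ t' p := fun p => by
    apply mul_nonneg (by positivity) ENNReal.toReal_nonneg
  have hsum0 : Summable (fun p : ℕ => μ ^ p / (p.factorial : ℝ)) :=
    Real.summable_pow_div_factorial μ
  have htle : ∀ p, t p ≤ μ ^ p / (p.factorial : ℝ) := fun p => by
    calc t p ≤ μ ^ p / (p.factorial : ℝ) * 1 :=
          mul_le_mul_of_nonneg_left (hVle1 p) (by positivity)
      _ = _ := mul_one _
  have ht : Summable t := hsum0.of_nonneg_of_le htnn htle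
  have ht' : Summable t' := hsum0.of_nonneg_of_le ht'nn fun p =>
    (mul_le_mul_of_nonneg_left ((hWleV p).trans (hVle1 p)) (by positivity)).trans_eq
      (mul_one _)
  -- rewrite partitionFn and the target sum
  have hVint : ∀ p : ℕ, (∫ Y : Fin p → Torus d,
      Set.indicator {Y : Fin p → Torus d | HardCore ε Y} (fun _ => (1 : ℝ)) Y)
        = (V p).toReal := by
    intro p
    rw [integral_indicator_const (1:ℝ) (measurableSet_HC ε p), smul_eq_mul, mul_one, measureReal_def]
  have hWint : ∀ p : ℕ, (∫ Y : Fin p → Torus d,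
      Set.indicator {Y : Fin p → Torus d | HardCore ε Y ∧
        ∀ (i : Fin n) (j : Fin p), ε < tdist (X i) (Y j)} (fun _ => (1 : ℝ)) Y)
        = (W p).toReal := by
    intro p
    rw [integral_indicator_const (1:ℝ) (measurableSet_HCX ε X), smul_eq_mul, mul_one, measureReal_def]
  have hZeq : partitionFn d ε = ∑' p, t p := by
    unfold partitionFn
    exact tsum_congr fun p => by rw [hVint p]
  have hZ'eq : (∑' p : ℕ, μ ^ p / (p.factorial : ℝ) *
      ∫ Y : Fin p → Torus d, Set.indicator {Y : Fin p → Torus d | HardCore ε Y ∧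
        ∀ (i : Fin n) (j : Fin p), ε < tdist (X i) (Y j)} (fun _ => (1 : ℝ)) Y)
      = ∑' p, t' p :=
    tsum_congr fun p => by rw [hWint p]
  rw [hZeq, hZ'eq]
  set Z : ℝ := ∑' p, t p with hZ
  set Z' : ℝ := ∑' p, t' p with hZ'
  -- Z ≥ 1
  have ht0 : t 0 = 1 := by
    have hu : {Y : Fin 0 → Torus d | HardCore ε Y} = Set.univ :=
      Set.eq_univ_iff_forall.2 fun Y i j _ => i.elim0
    simp [ht_def, hV, hu]
  have hZ1 : (1:ℝ) ≤ Z := by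
    rw [← ht0]
    exact Summable.le_tsum ht 0 fun p _ => htnn p
  have hZpos : (0:ℝ) < Z := lt_of_lt_of_le one_pos hZ1
  -- key term bound
  set c : ℝ := (n : ℝ) * (2*ε)^d * μ with hc
  have hkey : ∀ k : ℕ, t (k+1) - t' (k+1) ≤ c * t k := by
    intro k
    have h := key_bound hε.le X k
    have hRtop : W (k+1) + (n : ℝ≥0∞) * ((k+1 : ℕ) : ℝ≥0∞) *
        (ENNReal.ofReal ((2*ε)^d) * V k) ≠ ⊤ := by
      refine ENNReal.add_ne_top.2 ⟨hWtop _, ?_⟩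
      exact ENNReal.mul_ne_top (ENNReal.mul_ne_top (by simp) (by simp))
        (ENNReal.mul_ne_top ENNReal.ofReal_ne_top (hVtop k))
    have h2 := ENNReal.toReal_mono hRtop h
    rw [ENNReal.toReal_add (hWtop _) (ENNReal.mul_ne_top (ENNReal.mul_ne_top (by simp)
        (by simp)) (ENNReal.mul_ne_top ENNReal.ofReal_ne_top (hVtop k))),
      ENNReal.toReal_mul, ENNReal.toReal_mul, ENNReal.toReal_mul,
      ENNReal.toReal_natCast, ENNReal.toReal_natCast,
      ENNReal.toReal_ofReal (by positivity)] at h2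
    -- h2 : (V (k+1)).toReal ≤ (W (k+1)).toReal + n * (k+1) * ((2ε)^d * (V k).toReal)
    have hfac : ((k+1).factorial : ℝ) = ((k:ℝ)+1) * (k.factorial : ℝ) := by
      rw [Nat.factorial_succ]; push_cast; ring
    have hIJ : t (k+1) - t' (k+1)
        ≤ μ ^ (k+1) / ((k+1).factorial : ℝ) *
          ((n : ℝ) * ((k:ℝ)+1) * ((2*ε)^d * (V k).toReal)) := by
      rw [ht_def, ht'_def]
      have := sub_le_sub_right h2 ((W (k+1)).toReal)
      rw [add_sub_cancel_left] at this
      calc μ ^ (k+1) / ((k+1).factorial : ℝ) * (V (k+1)).toReal -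
            μ ^ (k+1) / ((k+1).factorial : ℝ) * (W (k+1)).toReal
          = μ ^ (k+1) / ((k+1).factorial : ℝ) * ((V (k+1)).toReal - (W (k+1)).toReal) := by
            ring
        _ ≤ _ := mul_le_mul_of_nonneg_left (by push_cast at this ⊢; linarith)
            (by positivity)
    refine hIJ.trans_eq ?_
    rw [hc, ht_def, hfac, pow_succ]
    have hkfac : (k.factorial : ℝ) ≠ 0 := Nat.cast_ne_zero.2 k.factorial_ne_zero
    field_simp
  -- summing up
  set D : ℕ → ℝ := fun p => t p - t' p with hD
  have hDsummable : Summable D := ht.sub ht'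
  have hDnn : ∀ p, 0 ≤ D p := fun p => sub_nonneg.2 <|
    mul_le_mul_of_nonneg_left (hWleV p) (by positivity)
  have hD0 : D 0 = 0 := by
    have hWV0 : W 0 = V 0 :=
      congrArg volume (Set.ext fun Y => ⟨fun h => h.1, fun h => ⟨h, fun i j => j.elim0⟩⟩)
    simp [hD, ht_def, ht'_def, hWV0]
  have hsumD : Z - Z' = ∑' p, D p := (Summable.tsum_sub ht ht').symm
  have hDle : ∑' p, D p ≤ c * Z := by
    have hshift : Summable fun k : ℕ => D (k+1) :=
      hDsummable.comp_injective Nat.succ_injective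
    calc ∑' p, D p = D 0 + ∑' k, D (k+1) := Summable.tsum_eq_zero_add hDsummable
      _ = ∑' k, D (k+1) := by rw [hD0, zero_add]
      _ ≤ ∑' k, c * t k := Summable.tsum_le_tsum hkey hshift (ht.mul_left c)
      _ = c * Z := tsum_mul_left
  have hcnn : 0 ≤ c := by
    rw [hc]; positivity
  -- conclude
  have hZne : Z ≠ 0 := hZpos.ne'
  have habs : 1 - Z⁻¹ * Z' = Z⁻¹ * (Z - Z') := by field_simp
  have hZZ' : (0:ℝ) ≤ Z - Z' := by rw [hsumD]; exact tsum_nonneg hDnn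
  rw [habs, abs_of_nonneg (mul_nonneg (inv_nonneg.2 hZpos.le) hZZ')]
  have hstep : Z⁻¹ * (Z - Z') ≤ c := by
    calc Z⁻¹ * (Z - Z') ≤ Z⁻¹ * (c * Z) := by
          rw [hsumD]
          exact mul_le_mul_of_nonneg_left hDle (inv_nonneg.2 hZpos.le)
      _ = c := by
          rw [mul_comm c Z, ← mul_assoc, inv_mul_cancel₀ hZne, one_mul]
  refine hstep.trans ?_
  -- c = n * 2^d * ε ≤ (2^(d+1))^n * ε
  have hd1 : d - 1 + 1 = d := by omega
  have hεd : ε ^ d * (ε⁻¹) ^ (d-1) = ε := by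
    calc ε ^ d * (ε⁻¹) ^ (d-1) = ε ^ (d-1) * ε * (ε⁻¹) ^ (d-1) := by
          rw [← pow_succ, hd1]
      _ = ε * (ε * ε⁻¹) ^ (d-1) := by rw [mul_pow]; ring
      _ = ε := by rw [mul_inv_cancel₀ hε.ne', one_pow, mul_one]
  have hceq : c = (n:ℝ) * 2^d * ε := by
    rw [hc, hμdef]
    unfold mu
    rw [mul_pow]
    calc (n:ℝ) * (2^d * ε^d) * (ε⁻¹)^(d-1) = (n:ℝ) * 2^d * (ε^d * (ε⁻¹)^(d-1)) := by ring
      _ = (n:ℝ) * 2^d * ε := by rw [hεd]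
  rw [hceq]
  have hn2 : (n:ℝ) ≤ 2^n := by exact_mod_cast (Nat.lt_two_pow_self (n := n)).le
  have h2d : (2:ℝ)^d ≤ (2^d)^n := le_self_pow₀ (one_le_pow₀ one_le_two) (by omega)
  have : (n:ℝ) * 2^d ≤ (2^(d+1))^n := by
    calc (n:ℝ) * 2^d ≤ 2^n * (2^d)^n := mul_le_mul hn2 h2d (by positivity) (by positivity)
      _ = (2 * 2^d)^n := by rw [mul_pow]
      _ = (2^(d+1))^n := by rw [pow_succ]; ring_nf
  exact mul_le_mul_of_nonneg_right this hε.le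
end

section
/- (Penrose tree inequality, hard-core case.) Let Ω be a finite set with |Ω| ≥ 2 and let a be a symmetric weight assigning to each unordered pair {X,Y} of distinct elements of Ω a real number a(X,Y) ∈ [−1,0]. Then |∑_{G connected graph on Ω} ∏_{{X,Y}∈E(G)} a(X,Y)| ≤ ∑_{T spanning tree of Ω} ∏_{{X,Y}∈E(T)} |a(X,Y)|, where the first sum runs over all connected simple graphs on vertex set Ω and the second over all trees on vertex set Ω. -/
open scoped BigOperators Classical
open SimpleGraph Finset

namespace PenroseAux

variable {Ω : Type*} [Fintype Ω] [DecidableEq Ω] [LinearOrder (Sym2 Ω)]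

attribute [-instance] Sym2.instPartialOrder

/-- endpoints of `e` are reachable in `H`. -/
def eReach (H : SimpleGraph Ω) (e : Sym2 Ω) : Prop :=
  Sym2.lift ⟨fun x y => H.Reachable x y,
    fun x y => propext ⟨Reachable.symm, Reachable.symm⟩⟩ e

@[simp] lemma eReach_mk (H : SimpleGraph Ω) (x y : Ω) :
    eReach H s(x, y) ↔ H.Reachable x y := Iff.rfl

lemma eReach_mono {H H' : SimpleGraph Ω} (h : H ≤ H') {e : Sym2 Ω}
    (he : eReach H e) : eReach H' e := by
  induction e using Sym2.ind with
  | _ x y => exact (he : H.Reachable x y).mono h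

/-- the subgraph of edges strictly smaller than `e`. -/
noncomputable def lowG (G : SimpleGraph Ω) (e : Sym2 Ω) : SimpleGraph Ω :=
  SimpleGraph.fromEdgeSet {f ∈ G.edgeSet | f < e}

lemma lowG_adj {G : SimpleGraph Ω} {e : Sym2 Ω} {x y : Ω} :
    (lowG G e).Adj x y ↔ G.Adj x y ∧ s(x, y) < e := by
  simp only [lowG, fromEdgeSet_adj, Set.mem_setOf_eq, mem_edgeSet]
  constructor
  · rintro ⟨⟨h1, h2⟩, _⟩; exact ⟨h1, h2⟩
  · rintro ⟨h1, h2⟩; exact ⟨⟨h1, h2⟩, h1.ne⟩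

lemma lowG_le {G : SimpleGraph Ω} {e : Sym2 Ω} : lowG G e ≤ G :=
  fun _ _ h => (lowG_adj.mp h).1

lemma lowG_mono_left {G G' : SimpleGraph Ω} (h : G ≤ G') (e : Sym2 Ω) :
    lowG G e ≤ lowG G' e :=
  fun _ _ hadj => lowG_adj.mpr ⟨h (lowG_adj.mp hadj).1, (lowG_adj.mp hadj).2⟩

lemma lowG_mono_right {G : SimpleGraph Ω} {e f : Sym2 Ω} (h : e ≤ f) :
    lowG G e ≤ lowG G f :=
  fun _ _ hadj => lowG_adj.mpr ⟨(lowG_adj.mp hadj).1, lt_of_lt_of_le (lowG_adj.mp hadj).2 h⟩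

/-- the (Kruskal) minimum spanning forest edge set. -/
noncomputable def mstSet (G : SimpleGraph Ω) : Set (Sym2 Ω) :=
  {e | e ∈ G.edgeSet ∧ ¬ eReach (lowG G e) e}

noncomputable def mst (G : SimpleGraph Ω) : SimpleGraph Ω :=
  SimpleGraph.fromEdgeSet (mstSet G)

lemma mstSet_subset (G : SimpleGraph Ω) : mstSet G ⊆ G.edgeSet := fun _ h => h.1

lemma mst_edgeSet (G : SimpleGraph Ω) : (mst G).edgeSet = mstSet G := by
  rw [mst, edgeSet_fromEdgeSet]
  rw [_root_.sdiff_eq_self_iff_disjoint, Set.disjoint_left]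
  intro e hd he
  exact G.not_isDiag_of_mem_edgeSet (mstSet_subset G he) hd

lemma mst_le (G : SimpleGraph Ω) : mst G ≤ G := by
  conv_rhs => rw [← fromEdgeSet_edgeSet (G := G)]
  rw [mst]
  exact fromEdgeSet_mono (mstSet_subset G)

/-- Core lemma: reachability among small edges of `G` implies reachability among
small edges of `mst G`. -/
lemma reach_low_mst (G : SimpleGraph Ω) :
    ∀ e : Sym2 Ω, ∀ x y : Ω, (lowG G e).Reachable x y → (lowG (mst G) e).Reachable x y := by
  intro e
  induction e using WellFoundedLT.induction with
  | _ e IH =>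
    intro x y hxy
    obtain ⟨w⟩ := hxy
    induction w with
    | nil => rfl
    | @cons x u y hadj p ih =>
      refine Reachable.trans ?_ ih
      obtain ⟨hG, hlt⟩ := lowG_adj.mp hadj
      by_cases hm : s(x, u) ∈ mstSet G
      · exact (Adj.reachable (lowG_adj.mpr ⟨by rwa [← mem_edgeSet, mst_edgeSet], hlt⟩))
      · have hr : eReach (lowG G s(x, u)) s(x, u) := by
          by_contra hc
          exact hm ⟨hG, hc⟩
        have := IH s(x, u) hlt x u (hr : (lowG G s(x,u)).Reachable x u)
        exact this.mono (lowG_mono_right hlt.le)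

lemma reach_mst (G : SimpleGraph Ω) {x y : Ω} (h : G.Reachable x y) :
    (mst G).Reachable x y := by
  obtain ⟨w⟩ := h
  induction w with
  | nil => rfl
  | @cons x u y hadj p ih =>
    refine Reachable.trans ?_ ih
    by_cases hm : s(x, u) ∈ mstSet G
    · exact Adj.reachable (by rwa [← mem_edgeSet, mst_edgeSet])
    · have hr : eReach (lowG G s(x, u)) s(x, u) := by
        by_contra hc
        exact hm ⟨hadj, hc⟩
      have := reach_low_mst G s(x, u) x u hr
      exact this.mono lowG_le

lemma mst_connected {G : SimpleGraph Ω} (h : G.Connected) : (mst G).Connected := by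
  rw [connected_iff] at h ⊢
  exact ⟨fun x y => reach_mst G (h.1 x y), h.2⟩

lemma mst_isAcyclic (G : SimpleGraph Ω) : (mst G).IsAcyclic := by
  have key : ∀ e : Sym2 Ω, e ∈ mstSet G → ∀ (u : Ω) (c : (mst G).Walk u u),
      c.IsCycle → e ∈ c.edges → (∀ f ∈ c.edges, f ≤ e) → False := by
    intro e
    induction e using Sym2.ind with
    | _ x y =>
      intro hxy u c hc he hmax
      set H : SimpleGraph Ω := SimpleGraph.fromEdgeSet {f ∈ mstSet G | f ≤ s(x, y)} with hH
      have hedges : ∀ f ∈ c.edges, f ∈ H.edgeSet := by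
        intro f hf
        have h1 : f ∈ mstSet G := by
          rw [← mst_edgeSet]; exact c.edges_subset_edgeSet hf
        rw [hH, edgeSet_fromEdgeSet]
        refine ⟨⟨h1, hmax f hf⟩, fun hd => G.not_isDiag_of_mem_edgeSet (h1.1) hd⟩
      have hc' : (c.transfer H hedges).IsCycle := hc.transfer hedges
      have he' : s(x, y) ∈ (c.transfer H hedges).edges := by
        rwa [Walk.edges_transfer]
      have hreach : H.Adj x y ∧ (H \ SimpleGraph.fromEdgeSet {s(x, y)}).Reachable x y :=
        (adj_and_reachable_delete_edges_iff_exists_cycle).mpr ⟨u, c.transfer H hedges, hc', he'⟩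
      have hle : (H \ SimpleGraph.fromEdgeSet {s(x, y)}) ≤ lowG G s(x, y) := by
        intro p q hpq
        rw [sdiff_adj] at hpq
        obtain ⟨hp1, hp2⟩ := hpq
        rw [hH, fromEdgeSet_adj] at hp1
        obtain ⟨⟨hm, hle⟩, hne⟩ := hp1
        have hne' : s(p, q) ≠ s(x, y) := by
          intro hcon
          exact hp2 ((fromEdgeSet_adj _).mpr ⟨by rw [hcon]; exact rfl, hne⟩)
        exact lowG_adj.mpr ⟨(mem_edgeSet _).mp (mstSet_subset G hm), lt_of_le_of_ne hle hne'⟩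
      exact hxy.2 (eReach_mk _ _ _ |>.mpr (hreach.2.mono hle))
  intro v c hc
  have hne : c.edges ≠ [] := by
    intro h
    have := hc.three_le_length
    rw [← Walk.length_edges, h] at this
    simp at this
  have hnefin : c.edges.toFinset.Nonempty := by
    rwa [List.toFinset_nonempty_iff]
  set e := c.edges.toFinset.max' hnefin with hedef
  have he : e ∈ c.edges := by
    have := c.edges.toFinset.max'_mem hnefin
    rwa [List.mem_toFinset] at this
  have hmax : ∀ f ∈ c.edges, f ≤ e := fun f hf =>
    c.edges.toFinset.le_max' f (List.mem_toFinset.mpr hf)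
  have hm : e ∈ mstSet G := by
    rw [← mst_edgeSet]; exact c.edges_subset_edgeSet he
  exact key e hm v c hc he hmax

lemma mst_isTree {G : SimpleGraph Ω} (h : G.Connected) : (mst G).IsTree :=
  ⟨mst_connected h, mst_isAcyclic G⟩

/-- every non-mst-edge of `G` closes a cycle of smaller mst edges. -/
lemma non_mst_edge {G : SimpleGraph Ω} {e : Sym2 Ω} (he : e ∈ G.edgeSet)
    (hm : e ∉ mstSet G) : eReach (lowG (mst G) e) e := by
  have hr : eReach (lowG G e) e := by
    by_contra hc
    exact hm ⟨he, hc⟩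
  induction e using Sym2.ind with
  | _ x y => exact reach_low_mst G s(x, y) x y hr

/-- The cut lemma: if `T` is acyclic and all the extra edges in `S` close cycles of
smaller `T`-edges, then every `T`-edge stays in the mst of `T ⊔ fromEdgeSet S`. -/
lemma cut_lemma {T : SimpleGraph Ω} (hT : T.IsAcyclic) {S : Set (Sym2 Ω)}
    (hS : ∀ f ∈ S, ¬f.IsDiag ∧ f ∉ T.edgeSet ∧ eReach (lowG T f) f)
    {x y : Ω} (hadj : T.Adj x y) :
    ¬ (lowG (T ⊔ SimpleGraph.fromEdgeSet S) s(x, y)).Reachable x y := by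
  set e := s(x, y) with hedef
  have hbr : ¬ (T \ SimpleGraph.fromEdgeSet {e}).Reachable x y :=
    ((isAcyclic_iff_forall_adj_isBridge.mp hT) hadj)
  intro hreach
  apply hbr
  obtain ⟨w⟩ := hreach
  have main : ∀ (z z' : Ω), (lowG (T ⊔ SimpleGraph.fromEdgeSet S) e).Walk z z' →
      (T \ SimpleGraph.fromEdgeSet {e}).Reachable x z →
      (T \ SimpleGraph.fromEdgeSet {e}).Reachable x z' := by
    intro z z' w'
    induction w' with
    | nil => exact id
    | @cons z u z' hadj' p ih =>
      intro hz
      apply ih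
      refine hz.trans ?_
      obtain ⟨hzu, hlt⟩ := lowG_adj.mp hadj'
      have hne : s(z, u) ≠ e := ne_of_lt hlt
      rcases (sup_adj _ _ _ _).mp hzu with hzuT | hzuS
      · refine Adj.reachable ?_
        rw [sdiff_adj]
        refine ⟨hzuT, fun hcon => hne ?_⟩
        rw [fromEdgeSet_adj] at hcon
        exact hcon.1
      · rw [fromEdgeSet_adj] at hzuS
        obtain ⟨hzuS', hne'⟩ := hzuS
        obtain ⟨-, -, hclose⟩ := hS _ hzuS'
        have hr : (lowG T s(z, u)).Reachable z u := hclose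
        refine hr.mono ?_
        intro p q hpq
        obtain ⟨hpqT, hpqlt⟩ := lowG_adj.mp hpq
        rw [sdiff_adj]
        refine ⟨hpqT, fun hcon => ?_⟩
        rw [fromEdgeSet_adj] at hcon
        exact absurd hcon.1 (ne_of_lt (hpqlt.trans hlt))
  exact main x y w Reachable.rfl

lemma mstSet_interval {T : SimpleGraph Ω} (hT : T.IsAcyclic) {S : Set (Sym2 Ω)}
    (hS : ∀ f ∈ S, ¬f.IsDiag ∧ f ∉ T.edgeSet ∧ eReach (lowG T f) f) :
    mstSet (T ⊔ SimpleGraph.fromEdgeSet S) = T.edgeSet := by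
  have hEdge : (T ⊔ SimpleGraph.fromEdgeSet S).edgeSet = T.edgeSet ∪ S := by
    rw [edgeSet_sup, edgeSet_fromEdgeSet]
    congr 1
    rw [_root_.sdiff_eq_self_iff_disjoint, Set.disjoint_left]
    intro f hd hf
    exact (hS f hf).1 hd
  ext e
  constructor
  · rintro ⟨he, hnr⟩
    rw [hEdge] at he
    rcases he with he | he
    · exact he
    · exfalso
      obtain ⟨-, -, hclose⟩ := hS _ he
      exact hnr (eReach_mono (lowG_mono_left le_sup_left e) hclose)
  · intro he
    refine ⟨by rw [hEdge]; exact Or.inl he, ?_⟩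
    have : ∀ x y : Ω, e = s(x, y) → T.Adj x y → ¬eReach (lowG (T ⊔ SimpleGraph.fromEdgeSet S) e) e := by
      rintro x y rfl hadj h
      exact cut_lemma hT hS hadj h
    induction e using Sym2.ind with
    | _ x y => exact this x y rfl ((mem_edgeSet _).mp he)

lemma mst_interval {T : SimpleGraph Ω} (hT : T.IsAcyclic) {S : Set (Sym2 Ω)}
    (hS : ∀ f ∈ S, ¬f.IsDiag ∧ f ∉ T.edgeSet ∧ eReach (lowG T f) f) :
    mst (T ⊔ SimpleGraph.fromEdgeSet S) = T := by
  rw [mst, mstSet_interval hT hS, fromEdgeSet_edgeSet]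

end PenroseAux

open PenroseAux

/-- Penrose tree inequality, hard-core case. -/
theorem statement7 (Ω : Type*) [Fintype Ω] [DecidableEq Ω] (hΩ : 2 ≤ Fintype.card Ω)
    (a : Ω → Ω → ℝ) (hsymm : ∀ x y, a x y = a y x)
    (hrange : ∀ x y : Ω, x ≠ y → a x y ∈ Set.Icc (-1 : ℝ) 0) :
    |∑ G ∈ Finset.univ.filter (fun G : SimpleGraph Ω => G.Connected),
        ∏ e ∈ G.edgeFinset, Sym2.lift ⟨a, hsymm⟩ e|
      ≤ ∑ T ∈ Finset.univ.filter (fun T : SimpleGraph Ω => T.IsTree),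
          ∏ e ∈ T.edgeFinset, |Sym2.lift ⟨a, hsymm⟩ e| := by
  classical
  letI : LinearOrder (Sym2 Ω) := LinearOrder.lift' (Fintype.equivFin (Sym2 Ω))
    (Fintype.equivFin (Sym2 Ω)).injective
  set w : Sym2 Ω → ℝ := Sym2.lift ⟨a, hsymm⟩ with hw
  -- weight range
  have hwrange : ∀ e : Sym2 Ω, ¬ e.IsDiag → w e ∈ Set.Icc (-1 : ℝ) 0 := by
    intro e
    induction e using Sym2.ind with
    | _ x y =>
      intro hd
      have hxy : x ≠ y := by simpa using hd
      simpa [hw] using hrange x y hxy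
  -- the extra edges allowed above a tree T
  set DT : SimpleGraph Ω → Finset (Sym2 Ω) := fun T =>
    Finset.univ.filter (fun e => ¬e.IsDiag ∧ e ∉ T.edgeSet ∧ eReach (lowG T e) e) with hDT
  -- step 1: reindex the sum over connected graphs
  have step1 : ∑ G ∈ Finset.univ.filter (fun G : SimpleGraph Ω => G.Connected),
        ∏ e ∈ G.edgeFinset, w e
      = ∑ p ∈ (Finset.univ.filter (fun T : SimpleGraph Ω => T.IsTree)).sigma
          (fun T => (DT T).powerset),
          (∏ e ∈ p.1.edgeFinset, w e) * ∏ e ∈ p.2, w e := by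
    refine Finset.sum_nbij' (i := fun G => ⟨mst G, G.edgeFinset \ (mst G).edgeFinset⟩)
      (j := fun p => p.1 ⊔ SimpleGraph.fromEdgeSet ↑p.2) ?_ ?_ ?_ ?_ ?_
    · intro G hG
      rw [Finset.mem_filter] at hG
      rw [Finset.mem_sigma]
      constructor
      · rw [Finset.mem_filter]
        exact ⟨Finset.mem_univ _, mst_isTree hG.2⟩
      · rw [Finset.mem_powerset]
        intro e he
        rw [Finset.mem_sdiff, mem_edgeFinset, mem_edgeFinset, mst_edgeSet] at he
        rw [hDT, Finset.mem_filter]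
        refine ⟨Finset.mem_univ _, G.not_isDiag_of_mem_edgeSet he.1, ?_,
          non_mst_edge he.1 he.2⟩
        rw [mst_edgeSet]; exact he.2
    · rintro ⟨T, S⟩ hp
      rw [Finset.mem_sigma, Finset.mem_filter, Finset.mem_powerset] at hp
      rw [Finset.mem_filter]
      exact ⟨Finset.mem_univ _, (hp.1.2.1).mono le_sup_left⟩
    · intro G hG
      rw [Finset.mem_filter] at hG
      simp only
      ext x y
      simp only [sup_adj, fromEdgeSet_adj, Finset.coe_sdiff, Set.mem_diff, Finset.mem_coe,
        mem_edgeFinset, mem_edgeSet, mst_edgeSet]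
      constructor
      · rintro (h | ⟨⟨h1, _⟩, _⟩)
        · exact (mem_edgeSet _).mp (mstSet_subset G (by rwa [← mst_edgeSet, mem_edgeSet]))
        · exact h1
      · intro h
        by_cases hm : (mst G).Adj x y
        · exact Or.inl hm
        · exact Or.inr ⟨⟨h, by rwa [← mem_edgeSet, mst_edgeSet] at hm⟩, h.ne⟩
    · rintro ⟨T, S⟩ hp
      rw [Finset.mem_sigma, Finset.mem_filter, Finset.mem_powerset] at hp
      obtain ⟨⟨-, hTtree⟩, hSsub⟩ := hp
      have hS : ∀ f ∈ (↑S : Set (Sym2 Ω)), ¬f.IsDiag ∧ f ∉ T.edgeSet ∧ eReach (lowG T f) f := by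
        intro f hf
        have := hSsub hf
        rw [hDT, Finset.mem_filter] at this
        exact this.2
      have hmst : mst (T ⊔ SimpleGraph.fromEdgeSet ↑S) = T := mst_interval hTtree.IsAcyclic hS
      simp only
      rw [hmst]
      congr 1
      ext e
      simp only [Finset.mem_sdiff, mem_edgeFinset, edgeSet_sup, edgeSet_fromEdgeSet,
        Set.mem_union, Set.mem_diff, Set.mem_setOf_eq]
      constructor
      · rintro ⟨h1 | ⟨h1, -⟩, h2⟩
        · exact absurd h1 h2
        · exact h1
      · intro he
        exact ⟨Or.inr ⟨he, (hS e he).1⟩, (hS e he).2.1⟩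
    · intro G hG
      rw [Finset.mem_filter] at hG
      have hsub : (mst G).edgeFinset ⊆ G.edgeFinset := by
        intro e he
        rw [mem_edgeFinset] at he ⊢
        exact edgeSet_mono (mst_le G) he
      rw [← Finset.prod_sdiff hsub, mul_comm]
  rw [step1, Finset.sum_sigma]
  -- step 2: sum the geometric-type inner sum
  have step2 : ∀ T : SimpleGraph Ω,
      ∑ S ∈ (DT T).powerset, (∏ e ∈ T.edgeFinset, w e) * ∏ e ∈ S, w e
        = (∏ e ∈ T.edgeFinset, w e) * ∏ e ∈ DT T, (w e + 1) := by
    intro T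
    rw [← Finset.mul_sum]
    congr 1
    rw [Finset.prod_add]
    simp
  calc |∑ T ∈ Finset.univ.filter (fun T : SimpleGraph Ω => T.IsTree),
        ∑ S ∈ (DT T).powerset, (∏ e ∈ (⟨T, S⟩ : Σ _ : SimpleGraph Ω, Finset (Sym2 Ω)).1.edgeFinset, w e) * ∏ e ∈ S, w e|
      = |∑ T ∈ Finset.univ.filter (fun T : SimpleGraph Ω => T.IsTree),
          (∏ e ∈ T.edgeFinset, w e) * ∏ e ∈ DT T, (w e + 1)| := by
        congr 1
        exact Finset.sum_congr rfl fun T _ => step2 T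
    _ ≤ ∑ T ∈ Finset.univ.filter (fun T : SimpleGraph Ω => T.IsTree),
          |(∏ e ∈ T.edgeFinset, w e) * ∏ e ∈ DT T, (w e + 1)| := Finset.abs_sum_le_sum_abs _ _
    _ ≤ ∑ T ∈ Finset.univ.filter (fun T : SimpleGraph Ω => T.IsTree),
          ∏ e ∈ T.edgeFinset, |w e| := by
        refine Finset.sum_le_sum fun T _ => ?_
        rw [abs_mul, Finset.abs_prod]
        have h1 : |∏ e ∈ DT T, (w e + 1)| ≤ 1 := by
          have hfac : ∀ e ∈ DT T, (0:ℝ) ≤ w e + 1 ∧ w e + 1 ≤ 1 := by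
            intro e he
            rw [hDT, Finset.mem_filter] at he
            obtain ⟨hle, hge⟩ := hwrange e he.2.1
            constructor <;> linarith
          rw [abs_of_nonneg (Finset.prod_nonneg fun e he => (hfac e he).1)]
          exact Finset.prod_le_one (fun e he => (hfac e he).1) (fun e he => (hfac e he).2)
        calc (∏ e ∈ T.edgeFinset, |w e|) * |∏ e ∈ DT T, (w e + 1)|
            ≤ (∏ e ∈ T.edgeFinset, |w e|) * 1 := by
              refine mul_le_mul_of_nonneg_left h1 ?_
              exact Finset.prod_nonneg fun e _ => abs_nonneg _
          _ = ∏ e ∈ T.edgeFinset, |w e| := mul_one _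
end

section
/- (Root cluster decomposition.) Let p ≥ 0, let V = {0,1,…,p}, and let a be any symmetric weight assigning a real number a(i,j) to each unordered pair of distinct elements of V. Then ∏_{0≤i<j≤p} (1 + a(i,j)) = ∑_{ω ⊆ {1,…,p}} ( ∑_{G connected graph on {0}∪ω} ∏_{(i,j)∈E(G)} a(i,j) ) · ∏_{i<j, i,j ∈ {1,…,p}∖ω} (1 + a(i,j)), where for ω = ∅ the inner sum equals 1 (the empty graph on the single vertex {0} is connected). -/
open scoped BigOperators Classical
open Finset

namespace St8

variable {p : ℕ}

/-- The simple graph on `Fin (p+1)` determined by a finset of (ordered) pairs. -/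
def GE (E : Finset (Fin (p+1) × Fin (p+1))) : SimpleGraph (Fin (p+1)) :=
  SimpleGraph.fromRel (fun i j => (i, j) ∈ E)

lemma GE_adj {E : Finset (Fin (p+1) × Fin (p+1))} {x y : Fin (p+1)} :
    (GE E).Adj x y ↔ x ≠ y ∧ ((x, y) ∈ E ∨ (y, x) ∈ E) := Iff.rfl

lemma GE_mono {E E' : Finset (Fin (p+1) × Fin (p+1))} (h : E ⊆ E') : GE E ≤ GE E' := by
  intro x y hxy
  exact ⟨hxy.1, hxy.2.imp (fun h' => h h') (fun h' => h h')⟩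

/-- All increasing pairs. -/
def P (p : ℕ) : Finset (Fin (p+1) × Fin (p+1)) :=
  Finset.univ.filter (fun e => e.1 < e.2)

/-- The root cluster: the set of nonzero vertices reachable from `0`. -/
noncomputable def ωE (E : Finset (Fin (p+1) × Fin (p+1))) : Finset (Fin (p+1)) :=
  (Finset.univ.erase 0).filter (fun v => (GE E).Reachable 0 v)

lemma mem_insert_ωE {E : Finset (Fin (p+1) × Fin (p+1))} {v : Fin (p+1)} :
    v ∈ insert 0 (ωE E) ↔ (GE E).Reachable 0 v := by
  rcases eq_or_ne v 0 with rfl | hv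
  · simpa using SimpleGraph.Reachable.refl (0 : Fin (p+1))
  · simp [ωE, hv]

/-- The type of vertices of the root cluster. -/
abbrev T (ω : Finset (Fin (p+1))) := {x : Fin (p+1) // x ∈ insert 0 ω}

/-- Increasing pairs within the cluster. -/
def PT (ω : Finset (Fin (p+1))) : Finset (T (p := p) ω × T ω) :=
  Finset.univ.filter (fun e => e.1.1 < e.2.1)

/-- Increasing pairs outside the cluster. -/
def Qf (ω : Finset (Fin (p+1))) : Finset (Fin (p+1) × Fin (p+1)) :=
  Finset.univ.filter (fun e => e.1 < e.2 ∧ e.1 ∉ insert 0 ω ∧ e.2 ∉ insert 0 ω)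

/-- Graph on the cluster from a finset of pairs. -/
def GT {ω : Finset (Fin (p+1))} (E₁ : Finset (T (p := p) ω × T ω)) : SimpleGraph (T (p := p) ω) :=
  SimpleGraph.fromRel (fun i j => (i, j) ∈ E₁)

/-- Edge finset of a graph on the cluster. -/
noncomputable def toE {ω : Finset (Fin (p+1))} (G : SimpleGraph (T (p := p) ω)) : Finset (T (p := p) ω × T ω) :=
  Finset.univ.filter (fun e => e.1.1 < e.2.1 ∧ G.Adj e.1 e.2)

/-- Restriction of a global edge finset to the cluster. -/
def sub (E : Finset (Fin (p+1) × Fin (p+1))) (ω : Finset (Fin (p+1))) :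
    Finset (T (p := p) ω × T ω) :=
  Finset.univ.filter (fun e => (e.1.1, e.2.1) ∈ E)

/-- Image of cluster pairs in global pairs. -/
def emb {ω : Finset (Fin (p+1))} (E₁ : Finset (T (p := p) ω × T ω)) :
    Finset (Fin (p+1) × Fin (p+1)) :=
  E₁.image (fun e => (e.1.1, e.2.1))

lemma prod_one_add {α : Type*} (s : Finset α) (f : α → ℝ) :
    ∏ e ∈ s, (1 + f e) = ∑ E ∈ s.powerset, ∏ e ∈ E, f e := by
  classical
  have := Finset.prod_add f (fun _ => (1 : ℝ)) s
  simp only [Finset.prod_const_one, mul_one] at this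
  rw [← this]
  exact Finset.prod_congr rfl (fun x _ => add_comm _ _)

lemma GT_toE {ω : Finset (Fin (p+1))} (G : SimpleGraph (T (p := p) ω)) :
    GT (toE G) = G := by
  ext x y
  constructor
  · rintro ⟨hne, h | h⟩
    · exact (Finset.mem_filter.mp h).2.2
    · exact ((Finset.mem_filter.mp h).2.2).symm
  · intro h
    refine ⟨h.ne, ?_⟩
    rcases lt_trichotomy x.1 y.1 with hlt | heq | hgt
    · exact Or.inl (Finset.mem_filter.mpr ⟨Finset.mem_univ _, hlt, h⟩)
    · exact absurd (Subtype.ext heq) h.ne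
    · exact Or.inr (Finset.mem_filter.mpr ⟨Finset.mem_univ _, hgt, h.symm⟩)

lemma toE_GT {ω : Finset (Fin (p+1))} {E₁ : Finset (T (p := p) ω × T ω)} (hE : E₁ ⊆ PT ω) :
    toE (GT E₁) = E₁ := by
  ext e
  unfold toE
  rw [Finset.mem_filter]
  simp only [GT, Finset.mem_univ, true_and]
  constructor
  · rintro ⟨hlt, -, h | h⟩
    · exact h
    · exact absurd (Finset.mem_filter.mp (hE h)).2 (asymm hlt)
  · intro h
    have hlt : e.1.1 < e.2.1 := (Finset.mem_filter.mp (hE h)).2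
    exact ⟨hlt, fun hh => (ne_of_lt hlt) (congrArg Subtype.val hh), Or.inl h⟩

lemma prod_toE {ω : Finset (Fin (p+1))} (G : SimpleGraph (T (p := p) ω))
    (a : Fin (p+1) → Fin (p+1) → ℝ) :
    (∏ i : T (p := p) ω, ∏ j : T (p := p) ω,
        if i.1 < j.1 ∧ G.Adj i j then a i.1 j.1 else 1)
      = ∏ e ∈ toE G, a e.1.1 e.2.1 := by
  rw [toE, Finset.prod_filter, ← Finset.univ_product_univ, Finset.prod_product]

lemma inner_sum (ω : Finset (Fin (p+1))) (a : Fin (p+1) → Fin (p+1) → ℝ) :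
    (∑ G : SimpleGraph (T (p := p) ω),
        if G.Connected then
          ∏ i : T (p := p) ω, ∏ j : T (p := p) ω,
            if i.1 < j.1 ∧ G.Adj i j then a i.1 j.1 else 1
        else 0)
      = ∑ E₁ ∈ (PT ω).powerset,
          if (GT E₁).Connected then ∏ e ∈ E₁, a e.1.1 e.2.1 else 0 := by
  refine Finset.sum_nbij' toE GT ?_ ?_ ?_ ?_ ?_
  · intro G _
    rw [Finset.mem_powerset]
    intro e he
    exact Finset.mem_filter.mpr ⟨Finset.mem_univ _, (Finset.mem_filter.mp he).2.1⟩
  · intro E₁ _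
    exact Finset.mem_univ _
  · intro G _
    exact GT_toE G
  · intro E₁ hE₁
    exact toE_GT (Finset.mem_powerset.mp hE₁)
  · intro G _
    rw [GT_toE, prod_toE]

lemma q_prod (ω : Finset (Fin (p+1))) (a : Fin (p+1) → Fin (p+1) → ℝ) :
    (∏ i : Fin (p+1), ∏ j : Fin (p+1),
        if i < j ∧ i ≠ 0 ∧ j ≠ 0 ∧ i ∉ ω ∧ j ∉ ω then 1 + a i j else 1)
      = ∑ E₂ ∈ (Qf ω).powerset, ∏ e ∈ E₂, a e.1 e.2 := by
  rw [← prod_one_add, Qf, Finset.prod_filter, ← Finset.univ_product_univ,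
    Finset.prod_product]
  refine Finset.prod_congr rfl fun i _ => Finset.prod_congr rfl fun j _ => ?_
  refine if_congr ?_ rfl rfl
  simp only [Finset.mem_insert, not_or]
  tauto

lemma lhs_prod (a : Fin (p+1) → Fin (p+1) → ℝ) :
    (∏ i : Fin (p+1), ∏ j : Fin (p+1), if i < j then 1 + a i j else 1)
      = ∑ E ∈ (P p).powerset, ∏ e ∈ E, a e.1 e.2 := by
  rw [← prod_one_add, P, Finset.prod_filter, ← Finset.univ_product_univ,
    Finset.prod_product]

lemma reach_closed {E : Finset (Fin (p+1) × Fin (p+1))} {K : Fin (p+1) → Prop}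
    (hK : ∀ u v, (GE E).Adj u v → K u → K v) {u v : Fin (p+1)}
    (h : (GE E).Reachable u v) : K u → K v := by
  obtain ⟨w⟩ := h
  induction w with
  | nil => exact id
  | cons h q ih => exact fun hu => ih (hK _ _ h hu)

lemma cross {E : Finset (Fin (p+1) × Fin (p+1))} {e : Fin (p+1) × Fin (p+1)}
    (he : e ∈ E) (hne : e.1 ≠ e.2) :
    (e.1 ∈ insert 0 (ωE E) ↔ e.2 ∈ insert 0 (ωE E)) := by
  have hadj : (GE E).Adj e.1 e.2 := ⟨hne, Or.inl he⟩
  simp only [mem_insert_ωE]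
  exact ⟨fun h => h.trans hadj.reachable, fun h => h.trans hadj.symm.reachable⟩

lemma walk_to_sub {E : Finset (Fin (p+1) × Fin (p+1))} :
    ∀ {u v : Fin (p+1)} (w : (GE E).Walk u v) (hu : u ∈ insert 0 (ωE E))
      (hv : v ∈ insert 0 (ωE E)),
      (GT (sub E (ωE E))).Reachable ⟨u, hu⟩ ⟨v, hv⟩ := by
  intro u v w
  induction w with
  | nil => intro hu hv; exact SimpleGraph.Reachable.refl _
  | @cons u b v h q ih =>
    intro hu hv
    have hb : b ∈ insert 0 (ωE E) := by
      rw [mem_insert_ωE] at hu ⊢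
      exact hu.trans h.reachable
    have hadj : (GT (sub E (ωE E))).Adj ⟨u, hu⟩ ⟨b, hb⟩ := by
      refine ⟨fun hh => h.ne (congrArg Subtype.val hh), ?_⟩
      rcases h.2 with h' | h'
      · exact Or.inl (Finset.mem_filter.mpr ⟨Finset.mem_univ _, h'⟩)
      · exact Or.inr (Finset.mem_filter.mpr ⟨Finset.mem_univ _, h'⟩)
    exact hadj.reachable.trans (ih hb hv)

lemma conn_sub (E : Finset (Fin (p+1) × Fin (p+1))) :
    (GT (sub E (ωE E))).Connected := by
  rw [SimpleGraph.connected_iff]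
  refine ⟨fun x y => ?_, ⟨⟨0, Finset.mem_insert_self _ _⟩⟩⟩
  have h0 : ∀ z : T (p := p) (ωE E),
      (GT (sub E (ωE E))).Reachable ⟨0, Finset.mem_insert_self _ _⟩ z := by
    intro z
    obtain ⟨w⟩ := mem_insert_ωE.mp z.2
    exact walk_to_sub w (Finset.mem_insert_self _ _) z.2
  exact (h0 x).symm.trans (h0 y)

lemma reach_of_GT {ω : Finset (Fin (p+1))} {E₁ : Finset (T (p := p) ω × T ω)}
    {E : Finset (Fin (p+1) × Fin (p+1))} (hE : emb E₁ ⊆ E) {x y : T (p := p) ω}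
    (h : (GT E₁).Reachable x y) : (GE E).Reachable x.1 y.1 := by
  let f : GT E₁ →g GE E :=
    { toFun := Subtype.val
      map_rel' := by
        rintro x y ⟨hne, h' | h'⟩
        · exact ⟨fun hh => hne (Subtype.ext hh),
            Or.inl (hE (Finset.mem_image_of_mem _ h'))⟩
        · exact ⟨fun hh => hne (Subtype.ext hh),
            Or.inr (hE (Finset.mem_image_of_mem _ h'))⟩ }
  exact h.map f

lemma emb_sub (E : Finset (Fin (p+1) × Fin (p+1))) (ω : Finset (Fin (p+1))) :
    emb (sub E ω) = E.filter (fun e => e.1 ∈ insert 0 ω ∧ e.2 ∈ insert 0 ω) := by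
  ext e
  simp only [emb, sub, Finset.mem_image, Finset.mem_filter, Finset.mem_univ, true_and]
  constructor
  · rintro ⟨x, hx, rfl⟩
    exact ⟨hx, x.1.2, x.2.2⟩
  · rintro ⟨he, h1, h2⟩
    exact ⟨(⟨e.1, h1⟩, ⟨e.2, h2⟩), he, rfl⟩

lemma emb_subset_P {ω : Finset (Fin (p+1))} {E₁ : Finset (T (p := p) ω × T ω)}
    (hE : E₁ ⊆ PT ω) : emb E₁ ⊆ P p := by
  intro e he
  obtain ⟨x, hx, rfl⟩ := Finset.mem_image.mp he
  exact Finset.mem_filter.mpr ⟨Finset.mem_univ _, (Finset.mem_filter.mp (hE hx)).2⟩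

-- forward direction lemmas (E a global edge set contained in `P p`)

lemma sub_mem_PT {E : Finset (Fin (p+1) × Fin (p+1))} (hE : E ⊆ P p) :
    sub E (ωE E) ⊆ PT (ωE E) := by
  intro e he
  have h := (Finset.mem_filter.mp he).2
  exact Finset.mem_filter.mpr ⟨Finset.mem_univ _, (Finset.mem_filter.mp (hE h)).2⟩

lemma filter_mem_Qf {E : Finset (Fin (p+1) × Fin (p+1))} (hE : E ⊆ P p) :
    E.filter (fun e => e.1 ∉ insert 0 (ωE E)) ⊆ Qf (ωE E) := by
  intro e he
  obtain ⟨heE, h1⟩ := Finset.mem_filter.mp he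
  have hlt : e.1 < e.2 := (Finset.mem_filter.mp (hE heE)).2
  have h2 : e.2 ∉ insert 0 (ωE E) := fun h => h1 ((cross heE (ne_of_lt hlt)).mpr h)
  exact Finset.mem_filter.mpr ⟨Finset.mem_univ _, hlt, h1, h2⟩

lemma filter_in_eq {E : Finset (Fin (p+1) × Fin (p+1))} (hE : E ⊆ P p) :
    E.filter (fun e => e.1 ∈ insert 0 (ωE E) ∧ e.2 ∈ insert 0 (ωE E))
      = E.filter (fun e => e.1 ∈ insert 0 (ωE E)) := by
  refine Finset.filter_congr fun e he => ?_
  have hlt : e.1 < e.2 := (Finset.mem_filter.mp (hE he)).2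
  exact ⟨fun h => h.1, fun h => ⟨h, (cross he (ne_of_lt hlt)).mp h⟩⟩

lemma recomb {E : Finset (Fin (p+1) × Fin (p+1))} (hE : E ⊆ P p) :
    emb (sub E (ωE E)) ∪ E.filter (fun e => e.1 ∉ insert 0 (ωE E)) = E := by
  rw [emb_sub, filter_in_eq hE]
  exact Finset.filter_union_filter_not_eq _ E

lemma prod_sub_eq {E : Finset (Fin (p+1) × Fin (p+1))} (ω : Finset (Fin (p+1)))
    (a : Fin (p+1) → Fin (p+1) → ℝ) :
    (∏ e ∈ sub E ω, a e.1.1 e.2.1) = ∏ e ∈ emb (sub E ω), a e.1 e.2 := by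
  rw [emb, Finset.prod_image]
  intro x _ y _ hxy
  obtain ⟨h1, h2⟩ := Prod.mk.injEq _ _ _ _ ▸ hxy
  exact Prod.ext (Subtype.ext h1) (Subtype.ext h2)

lemma prod_split {E : Finset (Fin (p+1) × Fin (p+1))} (hE : E ⊆ P p)
    (a : Fin (p+1) → Fin (p+1) → ℝ) :
    (∏ e ∈ E, a e.1 e.2)
      = (∏ e ∈ sub E (ωE E), a e.1.1 e.2.1)
        * ∏ e ∈ E.filter (fun e => e.1 ∉ insert 0 (ωE E)), a e.1 e.2 := by
  rw [prod_sub_eq, emb_sub, filter_in_eq hE,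
    Finset.prod_filter_mul_prod_filter_not]

-- backward direction lemmas

lemma omega_back {ω : Finset (Fin (p+1))} (hω : ω ⊆ Finset.univ.erase 0)
    {E₁ : Finset (T (p := p) ω × T ω)} {E₂ : Finset (Fin (p+1) × Fin (p+1))}
    (h2 : E₂ ⊆ Qf ω) (hconn : (GT E₁).Connected) :
    ωE (emb E₁ ∪ E₂) = ω := by
  ext v
  simp only [ωE, Finset.mem_filter, Finset.mem_erase, Finset.mem_univ, true_and, and_true]
  constructor
  · rintro ⟨hv0, hr⟩
    have hK : ∀ u b, (GE (emb E₁ ∪ E₂)).Adj u b → u ∈ insert 0 ω → b ∈ insert 0 ω := by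
      rintro u b ⟨-, hq | hq⟩ hu <;> rcases Finset.mem_union.mp hq with hq' | hq'
      · obtain ⟨x, -, hx⟩ := Finset.mem_image.mp hq'
        obtain ⟨h1, h2'⟩ := Prod.mk.injEq _ _ _ _ ▸ hx
        exact h2' ▸ x.2.2
      · exact absurd hu (Finset.mem_filter.mp (h2 hq')).2.2.1
      · obtain ⟨x, -, hx⟩ := Finset.mem_image.mp hq'
        obtain ⟨h1, h2'⟩ := Prod.mk.injEq _ _ _ _ ▸ hx
        exact h1 ▸ x.1.2
      · exact absurd hu (Finset.mem_filter.mp (h2 hq')).2.2.2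
    have hv : v ∈ insert 0 ω :=
      reach_closed hK hr (Finset.mem_insert_self _ _)
    exact (Finset.mem_insert.mp hv).resolve_left hv0
  · intro hv
    have hv0 : v ≠ 0 := (Finset.mem_erase.mp (hω hv)).1
    refine ⟨hv0, ?_⟩
    have := hconn.preconnected ⟨0, Finset.mem_insert_self _ _⟩
      ⟨v, Finset.mem_insert_of_mem hv⟩
    exact reach_of_GT Finset.subset_union_left this

lemma sub_back {ω : Finset (Fin (p+1))}
    {E₁ : Finset (T (p := p) ω × T ω)} {E₂ : Finset (Fin (p+1) × Fin (p+1))}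
    (h2 : E₂ ⊆ Qf ω) :
    sub (emb E₁ ∪ E₂) ω = E₁ := by
  ext e
  simp only [sub, Finset.mem_filter, Finset.mem_univ, true_and, Finset.mem_union]
  constructor
  · rintro (h | h)
    · obtain ⟨x, hx, hxe⟩ := Finset.mem_image.mp h
      obtain ⟨ha, hb⟩ := Prod.mk.injEq _ _ _ _ ▸ hxe
      have : x = e := Prod.ext (Subtype.ext ha) (Subtype.ext hb)
      exact this ▸ hx
    · exact absurd e.1.2 (Finset.mem_filter.mp (h2 h)).2.2.1
  · intro h
    exact Or.inl (Finset.mem_image_of_mem _ h)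

lemma filter_back {ω : Finset (Fin (p+1))}
    {E₁ : Finset (T (p := p) ω × T ω)} {E₂ : Finset (Fin (p+1) × Fin (p+1))}
    (h2 : E₂ ⊆ Qf ω) :
    (emb E₁ ∪ E₂).filter (fun e => e.1 ∉ insert 0 ω) = E₂ := by
  rw [Finset.filter_union]
  have hA : (emb E₁).filter (fun e => e.1 ∉ insert 0 ω) = ∅ := by
    refine Finset.filter_false_of_mem fun e he => ?_
    obtain ⟨x, -, hx⟩ := Finset.mem_image.mp he
    obtain ⟨ha, -⟩ := Prod.mk.injEq _ _ _ _ ▸ hx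
    exact fun hcon => hcon (ha ▸ x.1.2)
  have hB : E₂.filter (fun e => e.1 ∉ insert 0 ω) = E₂ :=
    Finset.filter_true_of_mem fun e he => (Finset.mem_filter.mp (h2 he)).2.2.1
  rw [hA, hB, Finset.empty_union]

/-- Parametrized forward map. -/
noncomputable def Phi' (ω : Finset (Fin (p+1))) (E : Finset (Fin (p+1) × Fin (p+1))) :
    Σ ω : Finset (Fin (p+1)), Finset (T (p := p) ω × T ω) × Finset (Fin (p+1) × Fin (p+1)) :=
  ⟨ω, (sub E ω, E.filter (fun e => e.1 ∉ insert 0 ω))⟩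

end St8

/-- root cluster decomposition of the interaction product on `{0,1,…,p}`. -/
theorem statement8 (p : ℕ) (a : Fin (p + 1) → Fin (p + 1) → ℝ)
    (hsymm : ∀ i j, a i j = a j i) :
    (∏ i : Fin (p + 1), ∏ j : Fin (p + 1), if i < j then 1 + a i j else 1)
      = ∑ ω ∈ ((Finset.univ : Finset (Fin (p + 1))).erase 0).powerset,
          (∑ G : SimpleGraph {x : Fin (p + 1) // x ∈ insert 0 ω},
            if G.Connected then
              ∏ i : {x : Fin (p + 1) // x ∈ insert 0 ω},
                ∏ j : {x : Fin (p + 1) // x ∈ insert 0 ω},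
                  if i.1 < j.1 ∧ G.Adj i j then a i.1 j.1 else 1
            else 0) *
          ∏ i : Fin (p + 1), ∏ j : Fin (p + 1),
            if i < j ∧ i ≠ 0 ∧ j ≠ 0 ∧ i ∉ ω ∧ j ∉ ω then 1 + a i j else 1 := by
  classical
  rw [St8.lhs_prod]
  have step1 :
      (∑ ω ∈ ((Finset.univ : Finset (Fin (p + 1))).erase 0).powerset,
          (∑ G : SimpleGraph {x : Fin (p + 1) // x ∈ insert 0 ω},
            if G.Connected then
              ∏ i : {x : Fin (p + 1) // x ∈ insert 0 ω},
                ∏ j : {x : Fin (p + 1) // x ∈ insert 0 ω},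
                  if i.1 < j.1 ∧ G.Adj i j then a i.1 j.1 else 1
            else 0) *
          ∏ i : Fin (p + 1), ∏ j : Fin (p + 1),
            if i < j ∧ i ≠ 0 ∧ j ≠ 0 ∧ i ∉ ω ∧ j ∉ ω then 1 + a i j else 1)
      = ∑ x ∈ (((Finset.univ : Finset (Fin (p + 1))).erase 0).powerset.sigma
            (fun ω => (St8.PT ω).powerset ×ˢ (St8.Qf ω).powerset)),
          (if (St8.GT x.2.1).Connected then ∏ e ∈ x.2.1, a e.1.1 e.2.1 else 0)
            * ∏ e ∈ x.2.2, a e.1 e.2 := by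
    rw [Finset.sum_sigma]
    refine Finset.sum_congr rfl fun ω hω => ?_
    rw [St8.inner_sum ω a, St8.q_prod ω a, Finset.sum_mul_sum, Finset.sum_product]
  rw [step1]
  simp only [ite_mul, zero_mul]
  rw [← Finset.sum_filter]
  refine Finset.sum_nbij' (fun E => St8.Phi' (St8.ωE E) E)
    (fun x => St8.emb x.2.1 ∪ x.2.2) ?_ ?_ ?_ ?_ ?_
  · intro E hE
    have hE' : E ⊆ St8.P p := Finset.mem_powerset.mp hE
    refine Finset.mem_filter.mpr ⟨Finset.mem_sigma.mpr ⟨?_, ?_⟩, ?_⟩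
    · exact Finset.mem_powerset.mpr (Finset.filter_subset _ _)
    · exact Finset.mem_product.mpr
        ⟨Finset.mem_powerset.mpr (St8.sub_mem_PT hE'),
         Finset.mem_powerset.mpr (St8.filter_mem_Qf hE')⟩
    · exact St8.conn_sub E
  · intro x hx
    obtain ⟨hmem, -⟩ := Finset.mem_filter.mp hx
    obtain ⟨-, hsnd⟩ := Finset.mem_sigma.mp hmem
    obtain ⟨h1, h2⟩ := Finset.mem_product.mp hsnd
    refine Finset.mem_powerset.mpr (Finset.union_subset ?_ ?_)
    · exact St8.emb_subset_P (Finset.mem_powerset.mp h1)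
    · intro e he
      have := (Finset.mem_filter.mp (Finset.mem_powerset.mp h2 he)).2.1
      exact Finset.mem_filter.mpr ⟨Finset.mem_univ _, this⟩
  · intro E hE
    exact St8.recomb (Finset.mem_powerset.mp hE)
  · rintro ⟨ω, E₁, E₂⟩ hx
    obtain ⟨hmem, hconn⟩ := Finset.mem_filter.mp hx
    obtain ⟨hfst, hsnd⟩ := Finset.mem_sigma.mp hmem
    obtain ⟨h1, h2⟩ := Finset.mem_product.mp hsnd
    have hω' : ω ⊆ Finset.univ.erase 0 := Finset.mem_powerset.mp hfst
    have h2' : E₂ ⊆ St8.Qf ω := Finset.mem_powerset.mp h2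
    have hom := St8.omega_back hω' h2' hconn
    show St8.Phi' (St8.ωE (St8.emb E₁ ∪ E₂)) (St8.emb E₁ ∪ E₂) = ⟨ω, (E₁, E₂)⟩
    rw [hom]
    exact congrArg (Sigma.mk ω) (Prod.ext (St8.sub_back h2') (St8.filter_back h2'))
  · intro E hE
    exact St8.prod_split (Finset.mem_powerset.mp hE) a
end

section
/- There exists a universal constant C > 0 such that for every integer r ≥ 2, ∑_{T labeled tree on vertex set {1,…,r}} ∏_{i=1}^{r} d_i(T)^{d_i(T)} ≤ C^r (r−1)!, where d_i(T) is the degree of vertex i in T and the sum runs over all trees (minimally connected simple graphs) on {1,…,r}. -/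
open scoped BigOperators Classical

section Aux

lemma succ_pow_le' (n : ℕ) : (n + 1) ^ n ≤ 3 * n ^ n := by
  rcases Nat.eq_zero_or_pos n with h | h
  · simp [h]
  have hn : (0:ℝ) < n := by exact_mod_cast h
  have key : ((n:ℝ) + 1) ^ n ≤ 3 * (n:ℝ) ^ n := by
    have h1 : ((n:ℝ) + 1) = (1 + 1 / n) * n := by field_simp
    have h2 : (1 + 1 / (n:ℝ)) ^ n ≤ 3 := by
      have := Real.add_one_le_exp (1 / (n:ℝ))
      calc (1 + 1 / (n:ℝ)) ^ n ≤ (Real.exp (1 / n)) ^ n := by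
            apply pow_le_pow_left₀ (by positivity) (by linarith)
        _ = Real.exp 1 := by
            rw [← Real.exp_nat_mul]; congr 1; field_simp
        _ ≤ 3 := by linarith [Real.exp_one_lt_d9]
    calc ((n:ℝ) + 1) ^ n = (1 + 1 / n) ^ n * n ^ n := by rw [h1, mul_pow]
      _ ≤ 3 * (n:ℝ) ^ n := by
          apply mul_le_mul_of_nonneg_right h2 (by positivity)
  exact_mod_cast key

lemma pow_self_le' (n : ℕ) : n ^ n ≤ 3 ^ n * n.factorial := by
  induction n with
  | zero => simp
  | succ n ih =>
    calc (n+1) ^ (n+1) = (n+1) * (n+1)^n := by ring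
      _ ≤ (n+1) * (3 * n ^ n) := Nat.mul_le_mul_left _ (succ_pow_le' n)
      _ ≤ (n+1) * (3 * (3 ^ n * n.factorial)) := by
          apply Nat.mul_le_mul_left; apply Nat.mul_le_mul_left; exact ih
      _ = 3 ^ (n+1) * (n+1).factorial := by
          rw [Nat.factorial_succ]; ring

lemma pow_self_mono' {a b : ℕ} (h : a ≤ b) : a ^ a ≤ b ^ b := by
  rcases Nat.eq_zero_or_pos b with hb | hb
  · subst hb; interval_cases a; simp
  calc a ^ a ≤ b ^ a := Nat.pow_le_pow_left h a
    _ ≤ b ^ b := Nat.pow_le_pow_right hb h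

lemma succ_pow_succ_le' (c : ℕ) : (c + 1) ^ (c + 1) ≤ 6 ^ (c + 1) * c.factorial := by
  calc (c + 1) ^ (c + 1) ≤ 3 ^ (c + 1) * (c + 1).factorial := pow_self_le' (c+1)
    _ = 3 ^ (c + 1) * ((c + 1) * c.factorial) := by rw [Nat.factorial_succ]
    _ ≤ 3 ^ (c + 1) * (2 ^ (c + 1) * c.factorial) := by
        apply Nat.mul_le_mul_left
        exact Nat.mul_le_mul_right _ (le_of_lt (Nat.lt_two_pow_self))
    _ = 6 ^ (c + 1) * c.factorial := by
        rw [show (6:ℕ) = 3 * 2 by norm_num, mul_pow]; ring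

lemma funsum' (s : ℕ) : ∀ n : ℕ,
    ∑ f : Fin n → Fin s, ∏ i : Fin s,
      (Finset.univ.filter fun j => f j = i).card.factorial ≤ (n + s) ^ n := by
  intro n
  induction n with
  | zero => simp
  | succ n ih =>
    have hsumfib : ∀ g : Fin n → Fin s,
        ∑ b : Fin s, (Finset.univ.filter fun j => g j = b).card = n := by
      intro g
      rw [← Finset.card_eq_sum_card_fiberwise (fun x _ => Finset.mem_univ (g x)),
        Finset.card_univ, Fintype.card_fin]
    have hequiv : ∑ f : Fin (n+1) → Fin s, ∏ i : Fin s,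
        (Finset.univ.filter fun j => f j = i).card.factorial
        = ∑ p : Fin s × (Fin n → Fin s), ∏ i : Fin s,
          (Finset.univ.filter fun j =>
            (Fin.cons p.1 p.2 : Fin (n+1) → Fin s) j = i).card.factorial := by
      rw [← Equiv.sum_comp (Fin.consEquiv (fun _ : Fin (n+1) => Fin s))
        (fun f : Fin (n+1) → Fin s => ∏ i : Fin s,
          (Finset.univ.filter fun j => f j = i).card.factorial)]
      rfl
    have hcard : ∀ (b : Fin s) (g : Fin n → Fin s) (i : Fin s),
        (Finset.univ.filter fun j => (Fin.cons b g : Fin (n+1) → Fin s) j = i).card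
          = (if b = i then 1 else 0) + (Finset.univ.filter fun j => g j = i).card := by
      intro b g i
      rw [Finset.card_filter, Finset.card_filter, Fin.sum_univ_succ]
      simp [Fin.cons_succ]
    have hprod : ∀ (b : Fin s) (g : Fin n → Fin s),
        (∏ i : Fin s,
          (Finset.univ.filter fun j => (Fin.cons b g : Fin (n+1) → Fin s) j = i).card.factorial)
        = ((Finset.univ.filter fun j => g j = b).card + 1) *
          ∏ i : Fin s, (Finset.univ.filter fun j => g j = i).card.factorial := by
      intro b g
      rw [← Finset.mul_prod_erase Finset.univ _ (Finset.mem_univ b),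
          ← Finset.mul_prod_erase Finset.univ
            (fun i => (Finset.univ.filter fun j => g j = i).card.factorial)
            (Finset.mem_univ b)]
      rw [Finset.prod_congr rfl (fun i hi => by
        rw [hcard b g i, if_neg (fun h => Finset.ne_of_mem_erase hi h.symm), zero_add])]
      rw [hcard b g b, if_pos rfl, add_comm 1, Nat.factorial_succ]
      ring
    have key : ∑ f : Fin (n+1) → Fin s, ∏ i : Fin s,
        (Finset.univ.filter fun j => f j = i).card.factorial
        = (n + s) * ∑ g : Fin n → Fin s, ∏ i : Fin s,
            (Finset.univ.filter fun j => g j = i).card.factorial := by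
      rw [hequiv, Fintype.sum_prod_type]
      calc ∑ b : Fin s, ∑ g : Fin n → Fin s, ∏ i : Fin s,
            (Finset.univ.filter fun j =>
              (Fin.cons b g : Fin (n+1) → Fin s) j = i).card.factorial
          = ∑ g : Fin n → Fin s, ∑ b : Fin s,
            ((Finset.univ.filter fun j => g j = b).card + 1) *
            ∏ i : Fin s, (Finset.univ.filter fun j => g j = i).card.factorial := by
            rw [Finset.sum_comm]
            exact Finset.sum_congr rfl fun g _ => Finset.sum_congr rfl fun b _ => hprod b g
        _ = (n + s) * ∑ g : Fin n → Fin s, ∏ i : Fin s,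
            (Finset.univ.filter fun j => g j = i).card.factorial := by
            rw [Finset.mul_sum]
            refine Finset.sum_congr rfl fun g _ => ?_
            rw [← Finset.sum_mul, Finset.sum_add_distrib, hsumfib g, Finset.sum_const,
              smul_eq_mul, mul_one, Finset.card_univ, Fintype.card_fin]
    rw [key]
    have h2 : (n + s) * (n + s) ^ n ≤ (n + 1 + s) ^ (n + 1) :=
      calc (n + s) * (n + s) ^ n = (n + s) ^ (n + 1) := (pow_succ' (n+s) n).symm
        _ ≤ (n + 1 + s) ^ (n + 1) :=
            Nat.pow_le_pow_left (Nat.add_le_add_right (Nat.le_succ n) s) (n+1)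
    exact le_trans (Nat.mul_le_mul le_rfl ih) h2

variable {V : Type*} [Fintype V] [DecidableEq V]

noncomputable def pm (G : SimpleGraph V) (v0 : V) : V → V := fun j =>
  if h : ∃ i, G.Adj j i ∧ G.dist i v0 < G.dist j v0 then h.choose else v0

lemma pm_spec {G : SimpleGraph V} {v0 : V} (hc : G.Connected) {j : V} (hj : j ≠ v0) :
    G.Adj j (pm G v0 j) ∧ G.dist (pm G v0 j) v0 < G.dist j v0 := by
  have hex : ∃ i, G.Adj j i ∧ G.dist i v0 < G.dist j v0 := by
    obtain ⟨p, hp⟩ := hc.exists_walk_length_eq_dist j v0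
    cases p with
    | nil => exact absurd rfl hj
    | cons h q =>
      refine ⟨_, h, ?_⟩
      have := SimpleGraph.dist_le q
      rw [← hp, SimpleGraph.Walk.length_cons]
      omega
  rw [pm, dif_pos hex]
  exact hex.choose_spec

lemma pm_injOn {G : SimpleGraph V} {v0 : V} (hc : G.Connected) :
    Set.InjOn (fun j => s(j, pm G v0 j)) (Finset.univ.erase v0 : Finset V) := by
  intro a ha b hb hab
  rw [Finset.mem_coe, Finset.mem_erase] at ha hb
  by_contra hne
  simp only [Sym2.eq_iff] at hab
  rcases hab with ⟨h1, h2⟩ | ⟨h1, h2⟩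
  · exact hne h1
  · have hda := (pm_spec hc ha.1).2
    have hdb := (pm_spec hc hb.1).2
    rw [h2] at hda
    rw [← h1] at hdb
    omega

lemma pm_image {G : SimpleGraph V} {v0 : V} (hT : G.IsTree) :
    Finset.image (fun j => s(j, pm G v0 j)) (Finset.univ.erase v0) = G.edgeFinset := by
  have hc := hT.isConnected
  apply Finset.eq_of_subset_of_card_le
  · intro e he
    obtain ⟨j, hj, rfl⟩ := Finset.mem_image.mp he
    rw [Finset.mem_erase] at hj
    rw [SimpleGraph.mem_edgeFinset, SimpleGraph.mem_edgeSet]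
    exact (pm_spec hc hj.1).1
  · rw [Finset.card_image_of_injOn (pm_injOn hc),
      Finset.card_erase_of_mem (Finset.mem_univ v0), Finset.card_univ]
    have h1 := hT.card_edgeFinset
    have h2 : 1 ≤ Fintype.card V := Fintype.card_pos_iff.mpr ⟨v0⟩
    omega

lemma deg_le {G : SimpleGraph V} {v0 : V} (hT : G.IsTree) (i : V) :
    (Finset.univ.filter fun j => G.Adj i j).card
      ≤ (Finset.univ.filter fun j => pm G v0 j = i ∧ j ≠ i).card + 1 := by
  have hsub : (Finset.univ.filter fun j => G.Adj i j)
      ⊆ insert (pm G v0 i) (Finset.univ.filter fun j => pm G v0 j = i ∧ j ≠ i) := by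
    intro k hk
    rw [Finset.mem_filter] at hk
    have hadj : G.Adj i k := hk.2
    have hmem : s(i, k) ∈ Finset.image (fun j => s(j, pm G v0 j)) (Finset.univ.erase v0) := by
      rw [pm_image hT, SimpleGraph.mem_edgeFinset, SimpleGraph.mem_edgeSet]
      exact hadj
    obtain ⟨j, hj, hje⟩ := Finset.mem_image.mp hmem
    rw [Sym2.eq_iff] at hje
    rcases hje with ⟨rfl, h2⟩ | ⟨rfl, h2⟩
    · rw [h2]; exact Finset.mem_insert_self _ _
    · refine Finset.mem_insert_of_mem (Finset.mem_filter.mpr ⟨Finset.mem_univ _, h2, ?_⟩)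
      exact hadj.ne'
  calc (Finset.univ.filter fun j => G.Adj i j).card
      ≤ (insert (pm G v0 i) (Finset.univ.filter fun j => pm G v0 j = i ∧ j ≠ i)).card :=
        Finset.card_le_card hsub
    _ ≤ (Finset.univ.filter fun j => pm G v0 j = i ∧ j ≠ i).card + 1 :=
        Finset.card_insert_le _ _

end Aux

set_option maxHeartbeats 1000000 in
/-- Cayley-type bound `∑_{T tree on [r]} ∏_i d_i(T)^{d_i(T)} ≤ C^r (r-1)!`. -/
theorem statement9 :
    ∃ C : ℝ, 0 < C ∧ ∀ r : ℕ, 2 ≤ r →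
      ∑ T ∈ Finset.univ.filter (fun T : SimpleGraph (Fin r) => T.IsTree),
          ∏ i : Fin r,
            ((Finset.univ.filter (fun j => T.Adj i j)).card : ℝ) ^
              (Finset.univ.filter (fun j => T.Adj i j)).card
        ≤ C ^ r * ((r - 1).factorial : ℝ) := by
  refine ⟨432, by norm_num, ?_⟩
  intro r hr
  have hrpos : 0 < r := by omega
  set z : Fin r := ⟨0, hrpos⟩ with hz
  -- the ℕ-valued sum over trees
  have key : (∑ T ∈ Finset.univ.filter (fun T : SimpleGraph (Fin r) => T.IsTree),
      ∏ i : Fin r,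
        (Finset.univ.filter (fun j => T.Adj i j)).card ^
          (Finset.univ.filter (fun j => T.Adj i j)).card)
      ≤ 432 ^ r * (r - 1).factorial := by
    -- step 1: each tree term bounded via parent map
    have step1 : ∀ T ∈ Finset.univ.filter (fun T : SimpleGraph (Fin r) => T.IsTree),
        (∏ i : Fin r,
          (Finset.univ.filter (fun j => T.Adj i j)).card ^
            (Finset.univ.filter (fun j => T.Adj i j)).card)
        ≤ ∏ i : Fin r,
          ((Finset.univ.filter fun j => pm T z j = i ∧ j ≠ i).card + 1) ^
            ((Finset.univ.filter fun j => pm T z j = i ∧ j ≠ i).card + 1) := by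
      intro T hT
      rw [Finset.mem_filter] at hT
      exact Finset.prod_le_prod' fun i _ => pow_self_mono' (deg_le hT.2 i)
    -- step 2: injectivity of the parent map on trees
    have hinj : Set.InjOn (fun T : SimpleGraph (Fin r) => pm T z)
        (Finset.univ.filter (fun T : SimpleGraph (Fin r) => T.IsTree)) := by
      intro T hT T' hT' hpm
      rw [Finset.mem_coe, Finset.mem_filter] at hT hT'
      have h1 := pm_image (G := T) (v0 := z) hT.2
      have h2 := pm_image (G := T') (v0 := z) hT'.2
      rw [← SimpleGraph.edgeFinset_inj (G₁ := T) (G₂ := T')]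
      rw [← h1, ← h2]
      simp only [hpm]
    -- c-vector and m-vector bounds, pointwise in f
    have step3 : ∀ f : Fin r → Fin r,
        (∏ i : Fin r,
          ((Finset.univ.filter fun j => f j = i ∧ j ≠ i).card + 1) ^
            ((Finset.univ.filter fun j => f j = i ∧ j ≠ i).card + 1))
        ≤ 6 ^ (2 * r) * ∏ i : Fin r, (Finset.univ.filter fun j => f j = i).card.factorial := by
      intro f
      have hcm : ∀ i, (Finset.univ.filter fun j => f j = i ∧ j ≠ i).card
          ≤ (Finset.univ.filter fun j => f j = i).card := by
        intro i
        apply Finset.card_le_card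
        exact Finset.monotone_filter_right _ (fun j _ hj => hj.1)
      have hmsum : ∑ i : Fin r, (Finset.univ.filter fun j => f j = i).card = r := by
        rw [← Finset.card_eq_sum_card_fiberwise (fun x _ => Finset.mem_univ (f x)),
          Finset.card_univ, Fintype.card_fin]
      have hcsum : ∑ i : Fin r, ((Finset.univ.filter fun j => f j = i ∧ j ≠ i).card + 1)
          ≤ 2 * r := by
        rw [Finset.sum_add_distrib, Finset.sum_const, smul_eq_mul, mul_one,
          Finset.card_univ, Fintype.card_fin]
        have : ∑ i : Fin r, (Finset.univ.filter fun j => f j = i ∧ j ≠ i).card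
            ≤ ∑ i : Fin r, (Finset.univ.filter fun j => f j = i).card :=
          Finset.sum_le_sum fun i _ => hcm i
        omega
      calc (∏ i : Fin r,
            ((Finset.univ.filter fun j => f j = i ∧ j ≠ i).card + 1) ^
              ((Finset.univ.filter fun j => f j = i ∧ j ≠ i).card + 1))
          ≤ ∏ i : Fin r,
            (6 ^ ((Finset.univ.filter fun j => f j = i ∧ j ≠ i).card + 1) *
              (Finset.univ.filter fun j => f j = i ∧ j ≠ i).card.factorial) :=
            Finset.prod_le_prod' fun i _ => succ_pow_succ_le' _
        _ = (∏ i : Fin r, 6 ^ ((Finset.univ.filter fun j => f j = i ∧ j ≠ i).card + 1)) *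
            ∏ i : Fin r, (Finset.univ.filter fun j => f j = i ∧ j ≠ i).card.factorial := by
            rw [Finset.prod_mul_distrib]
        _ ≤ 6 ^ (2 * r) * ∏ i : Fin r, (Finset.univ.filter fun j => f j = i).card.factorial := by
            apply Nat.mul_le_mul
            · rw [Finset.prod_pow_eq_pow_sum]
              exact Nat.pow_le_pow_right (by norm_num) hcsum
            · exact Finset.prod_le_prod' fun i _ => Nat.factorial_le (hcm i)
    have himage : ∀ g : (Fin r → Fin r) → ℕ,
        (∑ T ∈ Finset.univ.filter (fun T : SimpleGraph (Fin r) => T.IsTree), g (pm T z))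
          ≤ ∑ f : Fin r → Fin r, g f := by
      intro g
      have heq := Finset.sum_image
        (s := Finset.univ.filter (fun T : SimpleGraph (Fin r) => T.IsTree))
        (g := fun T : SimpleGraph (Fin r) => pm T z) (f := g)
        (fun x hx y hy h => hinj hx hy h)
      rw [← heq]
      exact Finset.sum_le_sum_of_subset (Finset.subset_univ _)
    -- assemble
    calc (∑ T ∈ Finset.univ.filter (fun T : SimpleGraph (Fin r) => T.IsTree),
        ∏ i : Fin r,
          (Finset.univ.filter (fun j => T.Adj i j)).card ^
            (Finset.univ.filter (fun j => T.Adj i j)).card)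
        ≤ ∑ T ∈ Finset.univ.filter (fun T : SimpleGraph (Fin r) => T.IsTree),
            ∏ i : Fin r,
              ((Finset.univ.filter fun j => pm T z j = i ∧ j ≠ i).card + 1) ^
                ((Finset.univ.filter fun j => pm T z j = i ∧ j ≠ i).card + 1) :=
          Finset.sum_le_sum step1
      _ ≤ ∑ f : Fin r → Fin r,
            ∏ i : Fin r,
              ((Finset.univ.filter fun j => f j = i ∧ j ≠ i).card + 1) ^
                ((Finset.univ.filter fun j => f j = i ∧ j ≠ i).card + 1) :=
          himage (fun f => ∏ i : Fin r,
            ((Finset.univ.filter fun j => f j = i ∧ j ≠ i).card + 1) ^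
              ((Finset.univ.filter fun j => f j = i ∧ j ≠ i).card + 1))
      _ ≤ ∑ f : Fin r → Fin r,
            6 ^ (2 * r) * ∏ i : Fin r, (Finset.univ.filter fun j => f j = i).card.factorial :=
          Finset.sum_le_sum fun f _ => step3 f
      _ = 6 ^ (2 * r) * ∑ f : Fin r → Fin r,
            ∏ i : Fin r, (Finset.univ.filter fun j => f j = i).card.factorial := by
          rw [Finset.mul_sum]
      _ ≤ 6 ^ (2 * r) * (r + r) ^ r :=
          Nat.mul_le_mul le_rfl (funsum' r r)
      _ ≤ 432 ^ r * (r - 1).factorial := by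
          have e1 : (6:ℕ) ^ (2 * r) = 36 ^ r := by
            rw [pow_mul]; norm_num
          have e2 : (r + r) ^ r = 2 ^ r * r ^ r := by
            rw [show r + r = 2 * r by ring, mul_pow]
          have e3 : r ^ r ≤ 3 ^ r * r.factorial := pow_self_le' r
          have e4 : r.factorial = r * (r - 1).factorial := (Nat.mul_factorial_pred hrpos.ne').symm
          have e5 : r ≤ 2 ^ r := le_of_lt (Nat.lt_two_pow_self)
          calc 6 ^ (2 * r) * (r + r) ^ r = 36 ^ r * (2 ^ r * r ^ r) := by rw [e1, e2]
            _ ≤ 36 ^ r * (2 ^ r * (3 ^ r * (r * (r - 1).factorial))) := by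
                apply Nat.mul_le_mul_left
                apply Nat.mul_le_mul_left
                rw [← e4]; exact e3
            _ ≤ 36 ^ r * (2 ^ r * (3 ^ r * (2 ^ r * (r - 1).factorial))) := by
                apply Nat.mul_le_mul_left
                apply Nat.mul_le_mul_left
                apply Nat.mul_le_mul_left
                exact Nat.mul_le_mul_right _ e5
            _ = 432 ^ r * (r - 1).factorial := by
                rw [show (432:ℕ) = 36 * 2 * 3 * 2 by norm_num]
                rw [mul_pow, mul_pow, mul_pow]
                ring
  -- cast to ℝ
  calc (∑ T ∈ Finset.univ.filter (fun T : SimpleGraph (Fin r) => T.IsTree),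
      ∏ i : Fin r,
        ((Finset.univ.filter (fun j => T.Adj i j)).card : ℝ) ^
          (Finset.univ.filter (fun j => T.Adj i j)).card)
      = ((∑ T ∈ Finset.univ.filter (fun T : SimpleGraph (Fin r) => T.IsTree),
          ∏ i : Fin r,
            (Finset.univ.filter (fun j => T.Adj i j)).card ^
              (Finset.univ.filter (fun j => T.Adj i j)).card : ℕ) : ℝ) := by
        push_cast
        rfl
    _ ≤ ((432 ^ r * (r - 1).factorial : ℕ) : ℝ) := Nat.cast_le.mpr key
    _ = (432:ℝ) ^ r * ((r - 1).factorial : ℝ) := by push_cast; ring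
end

section
/- For every integer p ≥ 1, ∑_{P set partition of {1,…,p}} (|P| − 1)! ≤ e^p · p!, where the sum runs over all partitions of the set {1,…,p} into nonempty blocks and |P| denotes the number of blocks of P. -/
open scoped BigOperators Classical

noncomputable def myFibers {p : ℕ} (f : Fin p → Fin p) : Finset (Finset (Fin p)) :=
  (Finset.univ.image f).image (fun v => Finset.univ.filter (fun x => f x = v))

lemma key_card_le {p : ℕ} (P : Finset (Finset (Fin p)))
    (h1 : ∀ s ∈ P, s.Nonempty)
    (h2 : ∀ s ∈ P, ∀ t ∈ P, s ≠ t → Disjoint s t)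
    (h3 : P.sup id = Finset.univ) :
    (P.card).factorial ≤
      ((Finset.univ : Finset (Fin p → Fin p)).filter (fun f => myFibers f = P)).card := by
  classical
  have hex : ∀ x : Fin p, ∃ B, B ∈ P ∧ x ∈ B := by
    intro x
    have : x ∈ P.sup id := by rw [h3]; exact Finset.mem_univ x
    rcases Finset.mem_sup.mp this with ⟨B, hB, hxB⟩
    exact ⟨B, hB, hxB⟩
  set blk : Fin p → Finset (Fin p) := fun x => (hex x).choose with hblk
  have hblkP : ∀ x, blk x ∈ P := fun x => (hex x).choose_spec.1
  have hxblk : ∀ x, x ∈ blk x := fun x => (hex x).choose_spec.2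
  have huniq : ∀ x B, B ∈ P → x ∈ B → blk x = B := by
    intro x B hB hxB
    by_contra hne
    exact Finset.disjoint_left.mp (h2 _ (hblkP x) _ hB hne) (hxblk x) hxB
  -- mins of distinct blocks are distinct
  have hmin : ∀ (B C : Finset (Fin p)) (hB : B ∈ P) (hC : C ∈ P)
      (hBne : B.Nonempty) (hCne : C.Nonempty),
      B.min' hBne = C.min' hCne → B = C := by
    intro B C hB hC hBne hCne h
    by_contra hne
    have := Finset.disjoint_left.mp (h2 _ hB _ hC hne) (B.min'_mem hBne)
    rw [h] at this
    exact this (C.min'_mem hCne)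
  set g : Equiv.Perm {B // B ∈ P} → (Fin p → Fin p) :=
    fun π x => ((π ⟨blk x, hblkP x⟩ : {B // B ∈ P}) : Finset (Fin p)).min'
      (h1 _ (π ⟨blk x, hblkP x⟩).2) with hg
  -- fiber of g π at the value of x0 is blk x0
  have hfiber : ∀ (π : Equiv.Perm {B // B ∈ P}) (x0 : Fin p),
      (Finset.univ.filter (fun x => g π x = g π x0)) = blk x0 := by
    intro π x0
    ext x
    simp only [Finset.mem_filter, Finset.mem_univ, true_and, hg]
    constructor
    · intro h
      have hBC := hmin _ _ (π ⟨blk x, hblkP x⟩).2 (π ⟨blk x0, hblkP x0⟩).2 _ _ h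
      have : (π ⟨blk x, hblkP x⟩) = (π ⟨blk x0, hblkP x0⟩) := Subtype.ext hBC
      have hblkeq : blk x = blk x0 := congrArg Subtype.val (π.injective this)
      rw [← hblkeq]; exact hxblk x
    · intro h
      have : blk x = blk x0 := huniq x _ (hblkP x0) h
      simp only [this]
  have hmem : ∀ π : Equiv.Perm {B // B ∈ P},
      g π ∈ (Finset.univ : Finset (Fin p → Fin p)).filter (fun f => myFibers f = P) := by
    intro π
    simp only [Finset.mem_filter, Finset.mem_univ, true_and]
    ext B
    unfold myFibers
    simp only [Finset.mem_image]
    constructor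
    · rintro ⟨v, ⟨x0, _, rfl⟩, rfl⟩
      rw [hfiber π x0]
      exact hblkP x0
    · intro hB
      rcases h1 B hB with ⟨x0, hx0⟩
      have hb0 : blk x0 = B := huniq x0 B hB hx0
      refine ⟨g π x0, ⟨x0, Finset.mem_univ _, rfl⟩, ?_⟩
      rw [hfiber π x0, hb0]
  have hinj : Function.Injective g := by
    intro π π' h
    refine Equiv.ext fun B => ?_
    rcases h1 B.1 B.2 with ⟨x0, hx0⟩
    have hb0 : blk x0 = B.1 := huniq x0 B.1 B.2 hx0
    have hx : g π x0 = g π' x0 := congrFun h x0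
    simp only [hg] at hx
    have := hmin _ _ (π ⟨blk x0, hblkP x0⟩).2 (π' ⟨blk x0, hblkP x0⟩).2 _ _ hx
    have h2' : π ⟨blk x0, hblkP x0⟩ = π' ⟨blk x0, hblkP x0⟩ := Subtype.ext this
    have hBsub : (⟨blk x0, hblkP x0⟩ : {B // B ∈ P}) = B := Subtype.ext hb0
    rw [hBsub] at h2'
    exact h2'
  calc (P.card).factorial = Fintype.card (Equiv.Perm {B // B ∈ P}) := by
        rw [Fintype.card_perm, Fintype.card_coe]
    _ = (Finset.univ : Finset (Equiv.Perm {B // B ∈ P})).card := Finset.card_univ.symm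
    _ ≤ _ := Finset.card_le_card_of_injOn g (fun π _ => hmem π) (hinj.injOn)

/-- `∑_{P partition of {1,…,p}} (|P|-1)! ≤ e^p · p!`. -/
theorem statement10 (p : ℕ) (hp : 1 ≤ p) :
    ∑ P ∈ Finset.univ.filter
        (fun P : Finset (Finset (Fin p)) =>
          (∀ s ∈ P, s.Nonempty) ∧
          (∀ s ∈ P, ∀ t ∈ P, s ≠ t → Disjoint s t) ∧
          P.sup id = Finset.univ),
        ((P.card - 1).factorial : ℝ)
      ≤ Real.exp p * (p.factorial : ℝ) := by
  classical
  set S := Finset.univ.filter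
        (fun P : Finset (Finset (Fin p)) =>
          (∀ s ∈ P, s.Nonempty) ∧
          (∀ s ∈ P, ∀ t ∈ P, s ≠ t → Disjoint s t) ∧
          P.sup id = Finset.univ) with hS
  set T : Finset (Finset (Fin p)) → Finset (Fin p → Fin p) :=
    fun P => (Finset.univ : Finset (Fin p → Fin p)).filter (fun f => myFibers f = P) with hT
  have hnat : ∑ P ∈ S, (P.card - 1).factorial ≤ p ^ p := by
    calc ∑ P ∈ S, (P.card - 1).factorial
        ≤ ∑ P ∈ S, (T P).card := by
          apply Finset.sum_le_sum
          intro P hP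
          simp only [hS, Finset.mem_filter] at hP
          exact le_trans (Nat.factorial_le (Nat.sub_le _ _))
            (key_card_le P hP.2.1 hP.2.2.1 hP.2.2.2)
      _ = (S.biUnion T).card := by
          rw [Finset.card_biUnion]
          intro P _ Q _ hne
          apply Finset.disjoint_left.mpr
          intro f hf hf'
          simp only [hT, Finset.mem_filter] at hf hf'
          exact hne (hf.2 ▸ hf'.2 ▸ rfl)
      _ ≤ (Finset.univ : Finset (Fin p → Fin p)).card := Finset.card_le_card (Finset.subset_univ _)
      _ = p ^ p := by simp [Fintype.card_fun]
  have hcast : ∑ P ∈ S, ((P.card - 1).factorial : ℝ) ≤ (p : ℝ) ^ p := by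
    rw [← Nat.cast_sum]
    calc ((∑ P ∈ S, (P.card - 1).factorial : ℕ) : ℝ) ≤ ((p ^ p : ℕ) : ℝ) := by
          exact_mod_cast hnat
      _ = (p : ℝ) ^ p := by push_cast; ring
  refine hcast.trans ?_
  have hfac : (0 : ℝ) < (p.factorial : ℝ) := by exact_mod_cast p.factorial_pos
  rw [← div_le_iff₀ hfac] at *
  have : (p : ℝ) ^ p / (p.factorial : ℝ) ≤ Real.exp p := by
    have h := Real.sum_le_exp_of_nonneg (x := (p : ℝ)) (by positivity) (p + 1)
    refine le_trans ?_ h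
    have : (p : ℝ) ^ p / (p.factorial : ℝ) =
        ∑ i ∈ Finset.range (p + 1), if i = p then (p : ℝ) ^ i / (i.factorial : ℝ) else 0 := by
      rw [Finset.sum_ite_eq' (Finset.range (p + 1)) p]
      simp [Finset.mem_range]
    rw [this]
    apply Finset.sum_le_sum
    intro i _
    split
    · simp
    · positivity
  linarith
end
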